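/- arXiv:2112.00156 — 4 statements merged into one kernel-verified Lean document; each statement's English description precedes it below -/
import Mathlib

section
/- Let R ⊆ [0,1]×[0,1] be a Borel set which is an almost-everywhere strict total order, and let φ(t) := Leb{x ∈ [0,1] : (x,t) ∈ R} be its rank function. Then φ is Borel measurable and the pushforward of Lebesgue measure on [0,1] under φ equals Lebesgue measure on [0,1]. -/
open MeasureTheory Set
open scoped ENNReal Topology

/-- Lebesgue measure on `[0,1]`. -/
noncomputable def leb01 : Measure ℝ := volume.restrict (Icc 0 1)

/-- A Borel set `R ⊆ [0,1] × [0,1]` is an almost-everywhere strict total order if for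
Lebesgue-a.e. `(x,y) ∈ [0,1]²` with `x ≠ y` exactly one of `(x,y) ∈ R`, `(y,x) ∈ R` holds,
and for Lebesgue-a.e. `(x,y,z) ∈ [0,1]³` the relation is transitive along `(x,y,z)`. -/
structure AEStrictTotalOrder (R : Set (ℝ × ℝ)) : Prop where
  measurable : MeasurableSet R
  subset : R ⊆ Icc (0:ℝ) 1 ×ˢ Icc (0:ℝ) 1
  total : ∀ᵐ p ∂(leb01.prod leb01),
    p.1 ≠ p.2 → Xor' ((p.1, p.2) ∈ R) ((p.2, p.1) ∈ R)
  trans : ∀ᵐ p ∂(leb01.prod (leb01.prod leb01)),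
    (p.1, p.2.1) ∈ R → (p.2.1, p.2.2) ∈ R → (p.1, p.2.2) ∈ R

/-- The rank function of `R`: `φ(t) = Leb {x ∈ [0,1] : (x,t) ∈ R}`. -/
noncomputable def rankFun (R : Set (ℝ × ℝ)) (t : ℝ) : ℝ :=
  (volume {x ∈ Icc (0:ℝ) 1 | (x, t) ∈ R}).toReal

namespace RankAux

lemma leb01_univ : leb01 univ = 1 := by
  simp [leb01, Real.volume_Icc]

instance : IsFiniteMeasure leb01 := ⟨by rw [leb01_univ]; exact ENNReal.one_lt_top⟩

lemma leb01_singleton (a : ℝ) : leb01 {a} = 0 := by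
  rw [leb01, Measure.restrict_apply (measurableSet_singleton a)]
  exact measure_mono_null inter_subset_left Real.volume_singleton

noncomputable def Phi (R : Set (ℝ × ℝ)) (t : ℝ) : ℝ≥0∞ := leb01 {x | (x, t) ∈ R}

lemma measurable_Phi {R : Set (ℝ × ℝ)} (hR : MeasurableSet R) : Measurable (Phi R) :=
  measurable_measure_prodMk_right hR

lemma Phi_le_one {R : Set (ℝ × ℝ)} (t : ℝ) : Phi R t ≤ 1 :=
  le_trans (measure_mono (subset_univ _)) leb01_univ.le

lemma Phi_ne_top {R : Set (ℝ × ℝ)} (t : ℝ) : Phi R t ≠ ∞ :=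
  ne_top_of_le_ne_top ENNReal.one_ne_top (Phi_le_one t)

lemma rankFun_eq {R : Set (ℝ × ℝ)} (hR : MeasurableSet R) (t : ℝ) :
    rankFun R t = (Phi R t).toReal := by
  unfold rankFun Phi
  congr 1
  have hm : MeasurableSet {x : ℝ | (x, t) ∈ R} := hR.preimage measurable_prodMk_right
  rw [leb01, Measure.restrict_apply hm]
  congr 1
  ext x
  simp only [mem_sep_iff, mem_inter_iff, mem_preimage, mem_setOf_eq]
  tauto

lemma Phi_eq_ofReal {R : Set (ℝ × ℝ)} (hR : MeasurableSet R) (t : ℝ) :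
    Phi R t = ENNReal.ofReal (rankFun R t) := by
  rw [rankFun_eq hR]; exact (ENNReal.ofReal_toReal (Phi_ne_top t)).symm

lemma measurable_rankFun {R : Set (ℝ × ℝ)} (hR : MeasurableSet R) :
    Measurable (rankFun R) := by
  have : rankFun R = fun t => (Phi R t).toReal := funext (rankFun_eq hR)
  rw [this]
  exact (measurable_Phi hR).ennreal_toReal

-- product measures
local notation "m2" => leb01.prod leb01
local notation "m3" => leb01.prod (leb01.prod leb01)

lemma MP.congr_fun {α β : Type*} [MeasurableSpace α] [MeasurableSpace β]
    {μ : Measure α} {ν : Measure β} {f g : α → β}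
    (h : MeasurePreserving f μ ν) (he : g = f) : MeasurePreserving g μ ν := he ▸ h

lemma mp_swap2 : MeasurePreserving Prod.swap m2 m2 := Measure.measurePreserving_swap

lemma mp_swap3 : MeasurePreserving Prod.swap ((leb01.prod leb01).prod leb01) m3 :=
  Measure.measurePreserving_swap

lemma mp_assoc : MeasurePreserving (MeasurableEquiv.prodAssoc : (ℝ × ℝ) × ℝ ≃ᵐ ℝ × ℝ × ℝ)
    ((leb01.prod leb01).prod leb01) m3 :=
  measurePreserving_prodAssoc _ _ _

lemma mp_s12 : MeasurePreserving (fun p : ℝ × ℝ × ℝ => (p.2.1, (p.1, p.2.2))) m3 m3 :=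
  MP.congr_fun (mp_assoc.comp ((mp_swap2.prod (MeasurePreserving.id leb01)).comp mp_assoc.symm))
    (funext fun p => rfl)

lemma mp_swap23 : MeasurePreserving (fun p : ℝ × ℝ × ℝ => (p.1, (p.2.2, p.2.1))) m3 m3 :=
  MP.congr_fun ((MeasurePreserving.id leb01).prod mp_swap2) (funext fun p => rfl)

lemma mp_m13 : MeasurePreserving (fun p : ℝ × ℝ × ℝ => (p.2.2, (p.2.1, p.1))) m3 m3 :=
  MP.congr_fun (mp_s12.comp (mp_swap23.comp mp_s12)) (funext fun p => rfl)

lemma mp_r : MeasurePreserving (fun p : ℝ × ℝ × ℝ => (p.2.1, (p.2.2, p.1))) m3 m3 :=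
  MP.congr_fun (mp_m13.comp mp_swap23) (funext fun p => rfl)

lemma mp_fst : MeasurePreserving (Prod.fst : ℝ × ℝ → ℝ) m2 leb01 :=
  ⟨measurable_fst, by simp [Measure.map_fst_prod, leb01_univ]⟩

lemma mp_snd : MeasurePreserving (Prod.snd : ℝ × ℝ → ℝ) m2 leb01 :=
  ⟨measurable_snd, by simp [Measure.map_snd_prod, leb01_univ]⟩

lemma mp_p23 : MeasurePreserving (Prod.snd : ℝ × ℝ × ℝ → ℝ × ℝ) m3 m2 :=
  ⟨measurable_snd, by simp [Measure.map_snd_prod, leb01_univ]⟩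

lemma mp_p12 : MeasurePreserving (fun p : ℝ × ℝ × ℝ => (p.1, p.2.1)) m3 m2 :=
  MP.congr_fun ((MeasurePreserving.id leb01).prod mp_fst) (funext fun p => rfl)

lemma mp_p13 : MeasurePreserving (fun p : ℝ × ℝ × ℝ => (p.1, p.2.2)) m3 m2 :=
  MP.congr_fun ((MeasurePreserving.id leb01).prod mp_snd) (funext fun p => rfl)

lemma ae_of_mp {α β : Type*} [MeasurableSpace α] [MeasurableSpace β]
    {μ : Measure α} {ν : Measure β} {f : α → β} (hf : MeasurePreserving f μ ν)
    {P : β → Prop} (h : ∀ᵐ y ∂ν, P y) : ∀ᵐ x ∂μ, P (f x) := by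
  rw [ae_iff] at h ⊢
  exact hf.quasiMeasurePreserving.preimage_null h

lemma diag_null : m2 {p : ℝ × ℝ | p.1 = p.2} = 0 := by
  have hm : MeasurableSet {p : ℝ × ℝ | p.1 = p.2} :=
    measurableSet_eq_fun measurable_fst measurable_snd
  rw [Measure.prod_apply hm]
  have hx : ∀ x : ℝ, Prod.mk x ⁻¹' {p : ℝ × ℝ | p.1 = p.2} = {x} := by
    intro x; ext y; simp [eq_comm]
  simp [hx, leb01_singleton]

section Order

variable {R : Set (ℝ × ℝ)}

def Ntot (R : Set (ℝ × ℝ)) : Set (ℝ × ℝ) :=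
  {p | p.1 ≠ p.2 ∧ ¬ Xor' ((p.1, p.2) ∈ R) ((p.2, p.1) ∈ R)}

def Ntr (R : Set (ℝ × ℝ)) : Set (ℝ × ℝ × ℝ) :=
  {p | (p.1, p.2.1) ∈ R ∧ (p.2.1, p.2.2) ∈ R ∧ (p.1, p.2.2) ∉ R}

lemma Ntot_null (hR : AEStrictTotalOrder R) : m2 (Ntot R) = 0 := by
  have h := hR.total
  rw [ae_iff] at h
  refine measure_mono_null ?_ h
  rintro p ⟨h1, h2⟩
  exact fun himp => h2 (himp h1)

lemma Ntr_null (hR : AEStrictTotalOrder R) : m3 (Ntr R) = 0 := by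
  have h := hR.trans
  rw [ae_iff] at h
  refine measure_mono_null ?_ h
  rintro p ⟨h1, h2, h3⟩
  exact fun himp => h3 (himp h1 h2)

/-- a.e. monotonicity of the rank function along `R`. -/
lemma mono_ae (hR : AEStrictTotalOrder R) :
    ∀ᵐ p ∂m2, (p.1, p.2) ∈ R → Phi R p.1 ≤ Phi R p.2 := by
  have h0 : ((leb01.prod leb01).prod leb01) (Prod.swap ⁻¹' Ntr R) = 0 :=
    mp_swap3.quasiMeasurePreserving.preimage_null (Ntr_null hR)
  have h1 : ∀ᵐ q ∂((leb01.prod leb01).prod leb01),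
      ¬((q.2, q.1.1) ∈ R ∧ (q.1.1, q.1.2) ∈ R ∧ (q.2, q.1.2) ∉ R) := by
    rw [ae_iff]
    exact measure_mono_null (fun q hq => not_not.mp hq) h0
  have h2 := Measure.ae_ae_of_ae_prod h1
  filter_upwards [h2] with p hp hp12
  have hnull : leb01 ({w | (w, p.1) ∈ R} \ {w | (w, p.2) ∈ R}) = 0 := by
    refine measure_mono_null ?_ (ae_iff.mp hp)
    rintro w ⟨hw1, hw2⟩
    exact fun hc => hc ⟨hw1, hp12, hw2⟩
  exact measure_mono_ae (ae_le_set.mpr hnull)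

lemma rev_ae (hR : AEStrictTotalOrder R) :
    ∀ᵐ p ∂m2, (p.2, p.1) ∈ R → Phi R p.2 ≤ Phi R p.1 :=
  ae_of_mp mp_swap2 (mono_ae hR)

lemma pair_ae (hR : AEStrictTotalOrder R) :
    ∀ᵐ p ∂m2, ((p.1, p.2) ∈ R → Phi R p.1 ≤ Phi R p.2) ∧
      (Phi R p.1 < Phi R p.2 → (p.1, p.2) ∈ R) := by
  filter_upwards [mono_ae hR, rev_ae hR, hR.total] with p h1 h2 h3
  refine ⟨h1, fun hlt => ?_⟩
  have hne : p.1 ≠ p.2 := by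
    intro h; rw [h] at hlt; exact lt_irrefl _ hlt
  rcases h3 hne with ⟨hx, -⟩ | ⟨hx, -⟩
  · exact hx
  · exact absurd (h2 hx) hlt.not_ge

/-- For a.e. `t`, simultaneously for a.e. `x`: the two key implications. -/
lemma fiber_ae (hR : AEStrictTotalOrder R) :
    ∀ᵐ t ∂leb01, ∀ᵐ x ∂leb01,
      ((x, t) ∈ R → Phi R x ≤ Phi R t) ∧ (Phi R x < Phi R t → (x, t) ∈ R) :=
  Measure.ae_ae_of_ae_prod (ae_of_mp mp_swap2 (pair_ae hR))

lemma sandwich (hR : AEStrictTotalOrder R) :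
    ∀ᵐ t ∂leb01, leb01 {x | Phi R x < Phi R t} ≤ Phi R t ∧
      Phi R t ≤ leb01 {x | Phi R x ≤ Phi R t} := by
  filter_upwards [fiber_ae hR] with t ht
  have hbad := ae_iff.mp ht
  constructor
  · refine measure_mono_ae (ae_le_set.mpr (measure_mono_null ?_ hbad))
    rintro x ⟨hx1, hx2⟩
    exact fun hc => hx2 (hc.2 hx1)
  · refine measure_mono_ae (ae_le_set.mpr (measure_mono_null ?_ hbad))
    rintro x ⟨hx1, hx2⟩
    exact fun hc => hx2 (hc.1 hx1)

end Order

section Atomless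

variable {R : Set (ℝ × ℝ)}

/-- For a.e. `t` in the fiber `{Φ = σ}`, the within-fiber rank is the constant `σ - Leb{Φ < σ}`. -/
lemma const_fiber (hR : AEStrictTotalOrder R) (σ : ℝ≥0∞) :
    ∀ᵐ t ∂leb01, Phi R t = σ →
      leb01 {x | Phi R x = σ ∧ (x, t) ∈ R} = σ - leb01 {x | Phi R x < σ} := by
  filter_upwards [fiber_ae hR] with t ht htT
  set A := {x : ℝ | (x, t) ∈ R} with hA
  have hbad := ae_iff.mp ht
  have hmlt : MeasurableSet {x | Phi R x < σ} := measurable_Phi hR.measurable measurableSet_Iio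
  have hmT : MeasurableSet {x | Phi R x = σ} :=
    measurable_Phi hR.measurable (measurableSet_singleton σ)
  have hmA : MeasurableSet A := hR.measurable.preimage measurable_prodMk_right
  have h1 : leb01 (A ∩ {x | Phi R x < σ}) + leb01 (A \ {x | Phi R x < σ}) = leb01 A :=
    measure_inter_add_diff A hmlt
  have h2 : leb01 (A ∩ {x | Phi R x < σ}) = leb01 {x | Phi R x < σ} := by
    have hdn : leb01 ({x | Phi R x < σ} \ A) = 0 := by
      refine measure_mono_null ?_ hbad
      rintro x ⟨hx1, hx2⟩
      refine fun hc => hx2 (hc.2 ?_)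
      rw [htT]; exact hx1
    have h3 := measure_inter_add_diff (μ := leb01) {x | Phi R x < σ} hmA
    rw [hdn, add_zero] at h3
    rw [inter_comm]; exact h3
  have h4 : leb01 (A \ {x | Phi R x < σ}) = leb01 {x | Phi R x = σ ∧ (x, t) ∈ R} := by
    have h5 := measure_inter_add_diff (μ := leb01) (A \ {x | Phi R x < σ}) hmT
    have h6 : leb01 ((A \ {x | Phi R x < σ}) \ {x | Phi R x = σ}) = 0 := by
      refine measure_mono_null ?_ hbad
      rintro x ⟨⟨hxA, hxlt⟩, hxne⟩
      have hgt : Phi R t < Phi R x := by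
        rw [htT]
        exact lt_of_le_of_ne (not_lt.mp hxlt) (fun h => hxne h.symm)
      exact fun hc => absurd (hc.1 hxA) hgt.not_ge
    have h7 : (A \ {x | Phi R x < σ}) ∩ {x | Phi R x = σ} = {x | Phi R x = σ ∧ (x, t) ∈ R} := by
      ext x
      simp only [mem_inter_iff, mem_diff, mem_setOf_eq, hA]
      constructor
      · rintro ⟨⟨hxA, -⟩, hxe⟩; exact ⟨hxe, hxA⟩
      · rintro ⟨hxe, hxA⟩; exact ⟨⟨hxA, by rw [hxe]; exact lt_irrefl σ⟩, hxe⟩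
    rw [h6, add_zero, h7] at h5
    exact h5.symm
  have hPt : Phi R t = leb01 A := rfl
  have hkey : σ = leb01 {x | Phi R x < σ} + leb01 {x | Phi R x = σ ∧ (x, t) ∈ R} := by
    calc σ = Phi R t := htT.symm
    _ = leb01 A := hPt
    _ = leb01 (A ∩ {x | Phi R x < σ}) + leb01 (A \ {x | Phi R x < σ}) := h1.symm
    _ = _ := by rw [h2, h4]
  exact (ENNReal.sub_eq_of_eq_add (measure_ne_top _ _)
    (by rw [add_comm]; exact hkey)).symm

/-- The pair-count over the fiber. -/
lemma m_eq (hR : AEStrictTotalOrder R) (σ : ℝ≥0∞) :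
    (leb01.prod leb01) (({t | Phi R t = σ} ×ˢ {t | Phi R t = σ}) ∩ R)
      = (σ - leb01 {x | Phi R x < σ}) * leb01 {t | Phi R t = σ} := by
  set T := {t | Phi R t = σ} with hTdef
  set d := σ - leb01 {x | Phi R x < σ} with hd
  have hmT : MeasurableSet T := measurable_Phi hR.measurable (measurableSet_singleton σ)
  have hSm : MeasurableSet ((T ×ˢ T) ∩ R) := (hmT.prod hmT).inter hR.measurable
  have h0 : (leb01.prod leb01) ((T ×ˢ T) ∩ R)
      = (leb01.prod leb01) (Prod.swap ⁻¹' ((T ×ˢ T) ∩ R)) :=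
    (mp_swap2.measure_preimage hSm.nullMeasurableSet).symm
  rw [h0, Measure.prod_apply (hSm.preimage measurable_swap)]
  have hsec : ∀ t : ℝ, Prod.mk t ⁻¹' (Prod.swap ⁻¹' ((T ×ˢ T) ∩ R))
      = {x | (x ∈ T ∧ t ∈ T) ∧ (x, t) ∈ R} := by
    intro t; ext x
    simp only [Set.mem_preimage, Set.mem_inter_iff, Set.mem_prod, Prod.swap_prod_mk,
      mem_setOf_eq]
    try tauto
  simp only [hsec]
  have hcongr : (fun t => leb01 {x | (x ∈ T ∧ t ∈ T) ∧ (x, t) ∈ R})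
      =ᵐ[leb01] T.indicator (fun _ => d) := by
    filter_upwards [const_fiber hR σ] with t ht
    by_cases htT : t ∈ T
    · rw [indicator_of_mem htT, hd, ← ht htT]
      congr 1; ext x
      simp only [mem_setOf_eq]
      exact ⟨fun h => ⟨h.1.1, h.2⟩, fun h => ⟨⟨h.1, htT⟩, h.2⟩⟩
    · rw [indicator_of_notMem htT]
      have he : {x | (x ∈ T ∧ t ∈ T) ∧ (x, t) ∈ R} = ∅ :=
        eq_empty_iff_forall_notMem.mpr (fun x hx => htT hx.1.2)
      rw [he, measure_empty]
  rw [lintegral_congr_ae hcongr, lintegral_indicator hmT, setLIntegral_const]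

lemma two_m (hR : AEStrictTotalOrder R) (σ : ℝ≥0∞) :
    (leb01.prod leb01) (({t | Phi R t = σ} ×ˢ {t | Phi R t = σ}) ∩ R)
      + (leb01.prod leb01) (({t | Phi R t = σ} ×ˢ {t | Phi R t = σ}) ∩ R)
      = leb01 {t | Phi R t = σ} * leb01 {t | Phi R t = σ} := by
  set T := {t | Phi R t = σ} with hTdef
  have hmT : MeasurableSet T := measurable_Phi hR.measurable (measurableSet_singleton σ)
  set S := (T ×ˢ T) ∩ R with hSdef
  have hSm : MeasurableSet S := (hmT.prod hmT).inter hR.measurable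
  set S' := Prod.swap ⁻¹' S with hS'def
  have hS'm : MeasurableSet S' := hSm.preimage measurable_swap
  have hswap : (leb01.prod leb01) S' = (leb01.prod leb01) S :=
    mp_swap2.measure_preimage hSm.nullMeasurableSet
  have hnd : (leb01.prod leb01) (Ntot R ∪ {p : ℝ × ℝ | p.1 = p.2}) = 0 :=
    measure_union_null (Ntot_null hR) diag_null
  have hinter : (leb01.prod leb01) (S ∩ S') = 0 := by
    refine measure_mono_null ?_ hnd
    rintro p ⟨⟨-, hpR⟩, hp'⟩
    by_cases hpe : p.1 = p.2
    · exact Or.inr hpe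
    · refine Or.inl ⟨hpe, fun hx => ?_⟩
      rcases hx with ⟨-, hb⟩ | ⟨-, hb⟩
      · exact hb hp'.2
      · exact hb hpR
  have hTT : (leb01.prod leb01) (T ×ˢ T) = leb01 T * leb01 T := Measure.prod_prod T T
  have hunion : (leb01.prod leb01) (S ∪ S') = leb01 T * leb01 T := by
    refine le_antisymm ?_ ?_
    · rw [← hTT]
      refine measure_mono ?_
      rintro p (⟨h1, -⟩ | hp')
      · exact h1
      · exact ⟨hp'.1.2, hp'.1.1⟩
    · have hdiff : (leb01.prod leb01) ((T ×ˢ T) \ (S ∪ S')) = 0 := by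
        refine measure_mono_null ?_ hnd
        rintro p ⟨hpTT, hpn⟩
        by_cases hpe : p.1 = p.2
        · exact Or.inr hpe
        · refine Or.inl ⟨hpe, fun hx => ?_⟩
          rcases hx with ⟨ha, -⟩ | ⟨ha, -⟩
          · exact hpn (Or.inl ⟨hpTT, ha⟩)
          · exact hpn (Or.inr ⟨⟨hpTT.2, hpTT.1⟩, ha⟩)
      have h8 := measure_inter_add_diff (μ := leb01.prod leb01) (T ×ˢ T) (hSm.union hS'm)
      rw [← hTT, ← h8, hdiff, add_zero]
      exact measure_mono inter_subset_right
  have h9 := measure_union_add_inter (μ := leb01.prod leb01) S hS'm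
  rw [hinter, add_zero, hswap, hunion] at h9
  exact h9.symm

/-- the "max of three" event, `p.2.2` being the top element of the fiber triple. -/
def E3 (R : Set (ℝ × ℝ)) (σ : ℝ≥0∞) : Set (ℝ × ℝ × ℝ) :=
  {p | (Phi R p.1 = σ ∧ Phi R p.2.1 = σ ∧ Phi R p.2.2 = σ) ∧
    (p.1, p.2.2) ∈ R ∧ (p.2.1, p.2.2) ∈ R}

lemma E3_meas (hR : AEStrictTotalOrder R) (σ : ℝ≥0∞) : MeasurableSet (E3 R σ) := by
  have hT : MeasurableSet {t : ℝ | Phi R t = σ} :=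
    measurable_Phi hR.measurable (measurableSet_singleton σ)
  have h1 : MeasurableSet {p : ℝ × ℝ × ℝ | Phi R p.1 = σ} := hT.preimage measurable_fst
  have h2 : MeasurableSet {p : ℝ × ℝ × ℝ | Phi R p.2.1 = σ} :=
    hT.preimage (measurable_fst.comp measurable_snd)
  have h3 : MeasurableSet {p : ℝ × ℝ × ℝ | Phi R p.2.2 = σ} :=
    hT.preimage (measurable_snd.comp measurable_snd)
  have h4 : MeasurableSet {p : ℝ × ℝ × ℝ | (p.1, p.2.2) ∈ R} :=
    hR.measurable.preimage (measurable_fst.prodMk (measurable_snd.comp measurable_snd))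
  have h5 : MeasurableSet {p : ℝ × ℝ × ℝ | (p.2.1, p.2.2) ∈ R} :=
    hR.measurable.preimage
      ((measurable_fst.comp measurable_snd).prodMk (measurable_snd.comp measurable_snd))
  exact ((h1.inter (h2.inter h3)).inter (h4.inter h5))

lemma M_eq (hR : AEStrictTotalOrder R) (σ : ℝ≥0∞) :
    (leb01.prod (leb01.prod leb01)) (E3 R σ)
      = (σ - leb01 {x | Phi R x < σ}) * (σ - leb01 {x | Phi R x < σ})
        * leb01 {t | Phi R t = σ} := by
  set T := {t | Phi R t = σ} with hTdef
  set d := σ - leb01 {x | Phi R x < σ} with hd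
  have hmT : MeasurableSet T := measurable_Phi hR.measurable (measurableSet_singleton σ)
  have hE3m := E3_meas hR σ
  have h0 : (leb01.prod (leb01.prod leb01)) (E3 R σ)
      = (leb01.prod (leb01.prod leb01))
          ((fun p : ℝ × ℝ × ℝ => (p.2.1, (p.2.2, p.1))) ⁻¹' E3 R σ) :=
    (mp_r.measure_preimage hE3m.nullMeasurableSet).symm
  rw [h0, Measure.prod_apply (hE3m.preimage mp_r.measurable)]
  have hsec : ∀ t : ℝ, Prod.mk t ⁻¹' ((fun p : ℝ × ℝ × ℝ => (p.2.1, (p.2.2, p.1))) ⁻¹' E3 R σ)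
      = {q : ℝ × ℝ | (q.1 ∈ T ∧ q.2 ∈ T ∧ t ∈ T) ∧ (q.1, t) ∈ R ∧ (q.2, t) ∈ R} := by
    intro t; ext q
    simp only [mem_preimage, E3, mem_setOf_eq, hTdef]
    try tauto
  simp only [hsec]
  have hcongr : (fun t => (leb01.prod leb01)
        {q : ℝ × ℝ | (q.1 ∈ T ∧ q.2 ∈ T ∧ t ∈ T) ∧ (q.1, t) ∈ R ∧ (q.2, t) ∈ R})
      =ᵐ[leb01] T.indicator (fun _ => d * d) := by
    filter_upwards [const_fiber hR σ] with t ht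
    by_cases htT : t ∈ T
    · rw [indicator_of_mem htT]
      have hqset : {q : ℝ × ℝ | (q.1 ∈ T ∧ q.2 ∈ T ∧ t ∈ T) ∧ (q.1, t) ∈ R ∧ (q.2, t) ∈ R}
          = {x | Phi R x = σ ∧ (x, t) ∈ R} ×ˢ {x | Phi R x = σ ∧ (x, t) ∈ R} := by
        ext q
        simp only [mem_setOf_eq, mem_prod, hTdef]
        tauto
      rw [hqset, Measure.prod_prod, hd, ht htT]
    · rw [indicator_of_notMem htT]
      have he : {q : ℝ × ℝ | (q.1 ∈ T ∧ q.2 ∈ T ∧ t ∈ T) ∧ (q.1, t) ∈ R ∧ (q.2, t) ∈ R} = ∅ :=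
        eq_empty_iff_forall_notMem.mpr (fun q hq => htT hq.1.2.2)
      rw [he, measure_empty]
  rw [lintegral_congr_ae hcongr, lintegral_indicator hmT, setLIntegral_const]

lemma three_M (hR : AEStrictTotalOrder R) (σ : ℝ≥0∞) :
    (leb01.prod (leb01.prod leb01)) (E3 R σ) + (leb01.prod (leb01.prod leb01)) (E3 R σ)
      + (leb01.prod (leb01.prod leb01)) (E3 R σ)
      = leb01 {t | Phi R t = σ} * (leb01 {t | Phi R t = σ} * leb01 {t | Phi R t = σ}) := by
  set T := {t | Phi R t = σ} with hTdef
  have hmT : MeasurableSet T := measurable_Phi hR.measurable (measurableSet_singleton σ)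
  have hE3m := E3_meas hR σ
  set E1 := (fun p : ℝ × ℝ × ℝ => (p.2.2, (p.2.1, p.1))) ⁻¹' E3 R σ with hE1def
  set E2 := (fun p : ℝ × ℝ × ℝ => (p.1, (p.2.2, p.2.1))) ⁻¹' E3 R σ with hE2def
  have hE1m : MeasurableSet E1 := hE3m.preimage mp_m13.measurable
  have hE2m : MeasurableSet E2 := hE3m.preimage mp_swap23.measurable
  have h1 : (leb01.prod (leb01.prod leb01)) E1 = (leb01.prod (leb01.prod leb01)) (E3 R σ) :=
    mp_m13.measure_preimage hE3m.nullMeasurableSet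
  have h2 : (leb01.prod (leb01.prod leb01)) E2 = (leb01.prod (leb01.prod leb01)) (E3 R σ) :=
    mp_swap23.measure_preimage hE3m.nullMeasurableSet
  -- membership characterizations
  have hE1mem : ∀ p : ℝ × ℝ × ℝ, p ∈ E1 ↔
      ((p.2.2 ∈ T ∧ p.2.1 ∈ T ∧ p.1 ∈ T) ∧ (p.2.2, p.1) ∈ R ∧ (p.2.1, p.1) ∈ R) := by
    intro p; rfl
  have hE2mem : ∀ p : ℝ × ℝ × ℝ, p ∈ E2 ↔
      ((p.1 ∈ T ∧ p.2.2 ∈ T ∧ p.2.1 ∈ T) ∧ (p.1, p.2.1) ∈ R ∧ (p.2.2, p.2.1) ∈ R) := by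
    intro p; rfl
  have hE3mem : ∀ p : ℝ × ℝ × ℝ, p ∈ E3 R σ ↔
      ((p.1 ∈ T ∧ p.2.1 ∈ T ∧ p.2.2 ∈ T) ∧ (p.1, p.2.2) ∈ R ∧ (p.2.1, p.2.2) ∈ R) := by
    intro p; rfl
  -- the bad (null) set
  have hnd : (leb01.prod leb01) (Ntot R ∪ {p : ℝ × ℝ | p.1 = p.2}) = 0 :=
    measure_union_null (Ntot_null hR) diag_null
  set B : Set (ℝ × ℝ × ℝ) :=
      ((fun p : ℝ × ℝ × ℝ => (p.1, p.2.1)) ⁻¹' (Ntot R ∪ {p : ℝ × ℝ | p.1 = p.2}))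
      ∪ ((fun p : ℝ × ℝ × ℝ => (p.1, p.2.2)) ⁻¹' (Ntot R ∪ {p : ℝ × ℝ | p.1 = p.2}))
      ∪ ((Prod.snd : ℝ × ℝ × ℝ → ℝ × ℝ) ⁻¹' (Ntot R ∪ {p : ℝ × ℝ | p.1 = p.2}))
      ∪ Ntr R
      ∪ ((fun p : ℝ × ℝ × ℝ => (p.2.1, (p.1, p.2.2))) ⁻¹' Ntr R) with hBdef
  have hB : (leb01.prod (leb01.prod leb01)) B = 0 := by
    refine measure_union_null (measure_union_null (measure_union_null
      (measure_union_null ?_ ?_) ?_) ?_) ?_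
    · exact mp_p12.quasiMeasurePreserving.preimage_null hnd
    · exact mp_p13.quasiMeasurePreserving.preimage_null hnd
    · exact mp_p23.quasiMeasurePreserving.preimage_null hnd
    · exact Ntr_null hR
    · exact mp_s12.quasiMeasurePreserving.preimage_null (Ntr_null hR)
  -- from non-membership in B extract the order facts
  have hfacts : ∀ p : ℝ × ℝ × ℝ, p ∉ B →
      (p.1 ≠ p.2.1 → Xor' ((p.1, p.2.1) ∈ R) ((p.2.1, p.1) ∈ R)) ∧
      (p.1 ≠ p.2.2 → Xor' ((p.1, p.2.2) ∈ R) ((p.2.2, p.1) ∈ R)) ∧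
      (p.2.1 ≠ p.2.2 → Xor' ((p.2.1, p.2.2) ∈ R) ((p.2.2, p.2.1) ∈ R)) ∧
      p.1 ≠ p.2.1 ∧ p.1 ≠ p.2.2 ∧ p.2.1 ≠ p.2.2 ∧
      ((p.1, p.2.1) ∈ R → (p.2.1, p.2.2) ∈ R → (p.1, p.2.2) ∈ R) ∧
      ((p.2.1, p.1) ∈ R → (p.1, p.2.2) ∈ R → (p.2.1, p.2.2) ∈ R) := by
    intro p hp
    simp only [hBdef, mem_union, not_or, mem_preimage] at hp
    obtain ⟨⟨⟨⟨h12, h13⟩, h23⟩, htr1⟩, htr2⟩ := hp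
    have ne12 : p.1 ≠ p.2.1 := h12.2
    have ne13 : p.1 ≠ p.2.2 := h13.2
    have ne23 : p.2.1 ≠ p.2.2 := h23.2
    refine ⟨fun hne => ?_, fun hne => ?_, fun hne => ?_, ne12, ne13, ne23,
      fun ha hb => ?_, fun ha hb => ?_⟩
    · exact not_not.mp (fun hx => h12.1 ⟨hne, hx⟩)
    · exact not_not.mp (fun hx => h13.1 ⟨hne, hx⟩)
    · exact not_not.mp (fun hx => h23.1 ⟨hne, hx⟩)
    · exact not_not.mp (fun hx => htr1 ⟨ha, hb, hx⟩)
    · exact not_not.mp (fun hx => htr2 ⟨ha, hb, hx⟩)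
  -- pairwise null intersections
  have hI12 : (leb01.prod (leb01.prod leb01)) (E1 ∩ E2) = 0 := by
    refine measure_mono_null ?_ hB
    rintro p ⟨hp1, hp2⟩
    rw [hE1mem] at hp1; rw [hE2mem] at hp2
    by_cases hpe : p.1 = p.2.1
    · exact Or.inl (Or.inl (Or.inl (Or.inl (Or.inr hpe))))
    · refine Or.inl (Or.inl (Or.inl (Or.inl (Or.inl ⟨hpe, fun hx => ?_⟩))))
      rcases hx with ⟨-, hb⟩ | ⟨-, hb⟩
      · exact hb hp1.2.2
      · exact hb hp2.2.1
  have hI13 : (leb01.prod (leb01.prod leb01)) (E1 ∩ E3 R σ) = 0 := by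
    refine measure_mono_null ?_ hB
    rintro p ⟨hp1, hp3⟩
    rw [hE1mem] at hp1; rw [hE3mem] at hp3
    by_cases hpe : p.1 = p.2.2
    · exact Or.inl (Or.inl (Or.inl (Or.inr (Or.inr hpe))))
    · refine Or.inl (Or.inl (Or.inl (Or.inr (Or.inl ⟨hpe, fun hx => ?_⟩))))
      rcases hx with ⟨-, hb⟩ | ⟨-, hb⟩
      · exact hb hp1.2.1
      · exact hb hp3.2.1
  have hI23 : (leb01.prod (leb01.prod leb01)) (E2 ∩ E3 R σ) = 0 := by
    refine measure_mono_null ?_ hB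
    rintro p ⟨hp2, hp3⟩
    rw [hE2mem] at hp2; rw [hE3mem] at hp3
    by_cases hpe : p.2.1 = p.2.2
    · exact Or.inl (Or.inl (Or.inr (Or.inr hpe)))
    · refine Or.inl (Or.inl (Or.inr (Or.inl ⟨hpe, fun hx => ?_⟩)))
      rcases hx with ⟨-, hb⟩ | ⟨-, hb⟩
      · exact hb hp2.2.2
      · exact hb hp3.2.2
  -- the union is a.e. the full fiber cube
  have hTT3 : (leb01.prod (leb01.prod leb01)) (T ×ˢ (T ×ˢ T))
      = leb01 T * (leb01 T * leb01 T) := by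
    rw [Measure.prod_prod, Measure.prod_prod]
  have hEsub : E1 ∪ E2 ∪ E3 R σ ⊆ T ×ˢ (T ×ˢ T) := by
    rintro p ((hp | hp) | hp)
    · rw [hE1mem] at hp; exact ⟨hp.1.2.2, hp.1.2.1, hp.1.1⟩
    · rw [hE2mem] at hp; exact ⟨hp.1.1, hp.1.2.2, hp.1.2.1⟩
    · rw [hE3mem] at hp; exact ⟨hp.1.1, hp.1.2.1, hp.1.2.2⟩
  have hcover : (leb01.prod (leb01.prod leb01)) ((T ×ˢ (T ×ˢ T)) \ (E1 ∪ E2 ∪ E3 R σ)) = 0 := by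
    refine measure_mono_null ?_ hB
    rintro p ⟨hpT, hpn⟩
    by_contra hpB
    obtain ⟨xor12, xor13, xor23, ne12, ne13, ne23, tr1, tr2⟩ := hfacts p hpB
    have hT1 : p.1 ∈ T := hpT.1
    have hT2 : p.2.1 ∈ T := hpT.2.1
    have hT3 : p.2.2 ∈ T := hpT.2.2
    apply hpn
    rcases xor12 ne12 with ⟨hxy, -⟩ | ⟨hyx, -⟩
    · rcases xor23 ne23 with ⟨hyt, -⟩ | ⟨hty, -⟩
      · exact Or.inr ((hE3mem p).mpr ⟨⟨hT1, hT2, hT3⟩, tr1 hxy hyt, hyt⟩)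
      · exact Or.inl (Or.inr ((hE2mem p).mpr ⟨⟨hT1, hT3, hT2⟩, hxy, hty⟩))
    · rcases xor13 ne13 with ⟨hxt, -⟩ | ⟨htx, -⟩
      · exact Or.inr ((hE3mem p).mpr ⟨⟨hT1, hT2, hT3⟩, hxt, tr2 hyx hxt⟩)
      · exact Or.inl (Or.inl ((hE1mem p).mpr ⟨⟨hT3, hT2, hT1⟩, htx, hyx⟩))
  have hUnion : (leb01.prod (leb01.prod leb01)) (E1 ∪ E2 ∪ E3 R σ)
      = leb01 T * (leb01 T * leb01 T) := by
    refine le_antisymm ?_ ?_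
    · rw [← hTT3]; exact measure_mono hEsub
    · have h8 := measure_inter_add_diff (μ := leb01.prod (leb01.prod leb01))
        (T ×ˢ (T ×ˢ T)) ((hE1m.union hE2m).union hE3m)
      rw [← hTT3, ← h8, hcover, add_zero]
      exact measure_mono inter_subset_right
  have hu12 : (leb01.prod (leb01.prod leb01)) (E1 ∪ E2)
      = (leb01.prod (leb01.prod leb01)) E1 + (leb01.prod (leb01.prod leb01)) E2 := by
    have h9 := measure_union_add_inter (μ := leb01.prod (leb01.prod leb01)) E1 hE2m
    rw [hI12, add_zero] at h9
    exact h9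
  have hI123 : (leb01.prod (leb01.prod leb01)) ((E1 ∪ E2) ∩ E3 R σ) = 0 := by
    refine measure_mono_null ?_ (measure_union_null hI13 hI23)
    rintro p ⟨hp | hp, hp3⟩
    · exact Or.inl ⟨hp, hp3⟩
    · exact Or.inr ⟨hp, hp3⟩
  have hu123 : (leb01.prod (leb01.prod leb01)) (E1 ∪ E2 ∪ E3 R σ)
      = (leb01.prod (leb01.prod leb01)) (E1 ∪ E2)
        + (leb01.prod (leb01.prod leb01)) (E3 R σ) := by
    have h9 := measure_union_add_inter (μ := leb01.prod (leb01.prod leb01)) (E1 ∪ E2) hE3m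
    rw [hI123, add_zero] at h9
    exact h9
  rw [← hUnion, hu123, hu12, h1, h2]

/-- The pushforward of `leb01` under the rank function has no atoms. -/
lemma atomless (hR : AEStrictTotalOrder R) (σ : ℝ≥0∞) : leb01 {t | Phi R t = σ} = 0 := by
  set T := {t | Phi R t = σ} with hTdef
  set c := leb01 T with hc
  set d := σ - leb01 {x | Phi R x < σ} with hd
  by_cases hσ : σ ≤ 1
  · have hσtop : σ ≠ ∞ := ne_top_of_le_ne_top ENNReal.one_ne_top hσ
    have hdtop : d ≠ ∞ := ne_top_of_le_ne_top hσtop (hd ▸ tsub_le_self)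
    by_contra hc0
    have e1 := two_m hR σ
    have hm := m_eq hR σ
    have e2 := three_M hR σ
    have hM := M_eq hR σ
    rw [hm] at e1
    rw [hM] at e2
    have hcfin : c ≠ ∞ := measure_ne_top _ _
    set C := c.toReal with hC
    set D := d.toReal with hD
    have hCpos : 0 < C := ENNReal.toReal_pos hc0 hcfin
    have hdcfin : d * c ≠ ∞ := ENNReal.mul_ne_top hdtop hcfin
    have hddcfin : d * d * c ≠ ∞ := ENNReal.mul_ne_top (ENNReal.mul_ne_top hdtop hdtop) hcfin
    have e1' : D * C + D * C = C * C := by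
      have h := congrArg ENNReal.toReal e1
      rw [ENNReal.toReal_add hdcfin hdcfin] at h
      simp only [ENNReal.toReal_mul] at h
      exact h
    have e2' : D * D * C + D * D * C + D * D * C = C * (C * C) := by
      have h := congrArg ENNReal.toReal e2
      rw [ENNReal.toReal_add (ENNReal.add_ne_top.mpr ⟨hddcfin, hddcfin⟩) hddcfin,
        ENNReal.toReal_add hddcfin hddcfin] at h
      simp only [ENNReal.toReal_mul] at h
      exact h
    have k1 : C * C = 2 * (D * C) := by linarith
    have k2 : 3 * (D * D * C) = C * (C * C) := by linarith
    have k3 : C * (C * C) = 4 * (D * D * C) := by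
      calc C * (C * C) = C * (2 * (D * C)) := by rw [k1]
      _ = (C * C) * (2 * D) := by ring
      _ = (2 * (D * C)) * (2 * D) := by rw [k1]
      _ = 4 * (D * D * C) := by ring
    have hX : D * D * C = 0 := by linarith
    have hDD : D * D = 0 := by
      rcases mul_eq_zero.mp hX with h | h
      · exact h
      · exact absurd h hCpos.ne'
    have hD0 : D = 0 := mul_self_eq_zero.mp hDD
    have hCC : C * C = 0 := by rw [k1, hD0]; ring
    exact absurd (mul_self_eq_zero.mp hCC) hCpos.ne'
  · have hT : T = ∅ := by
      refine eq_empty_iff_forall_notMem.mpr (fun t ht => hσ ?_)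
      have : Phi R t = σ := ht
      rw [← this]
      exact Phi_le_one t
    rw [hc, hT, measure_empty]

end Atomless

section Endgame

variable {R : Set (ℝ × ℝ)}

lemma id_ae (hR : AEStrictTotalOrder R) :
    ∀ᵐ t ∂leb01, leb01 {x | Phi R x ≤ Phi R t} = Phi R t := by
  filter_upwards [sandwich hR] with t ht
  obtain ⟨h1, h2⟩ := ht
  refine le_antisymm ?_ h2
  have hmlt : MeasurableSet {x | Phi R x < Phi R t} :=
    measurable_Phi hR.measurable measurableSet_Iio
  have hsplit := measure_inter_add_diff (μ := leb01) {x | Phi R x ≤ Phi R t} hmlt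
  have hi : {x | Phi R x ≤ Phi R t} ∩ {x | Phi R x < Phi R t} = {x | Phi R x < Phi R t} := by
    ext x; simp only [mem_inter_iff, mem_setOf_eq]
    exact ⟨fun h => h.2, fun h => ⟨h.le, h⟩⟩
  have hm0 : leb01 ({x | Phi R x ≤ Phi R t} \ {x | Phi R x < Phi R t}) = 0 := by
    refine measure_mono_null ?_ (atomless hR (Phi R t))
    rintro x ⟨hx1, hx2⟩
    exact le_antisymm hx1 (not_lt.mp hx2)
  rw [hi, hm0, add_zero] at hsplit
  rw [← hsplit]
  exact h1

/-- The set of "good" levels. -/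
def Gs (R : Set (ℝ × ℝ)) : Set ℝ :=
  {u | u ∈ Icc (0:ℝ) 1 ∧ leb01 {t | Phi R t ≤ ENNReal.ofReal u} = ENNReal.ofReal u}

lemma zero_mem_Gs (hR : AEStrictTotalOrder R) : (0:ℝ) ∈ Gs R := by
  refine ⟨⟨le_refl 0, zero_le_one⟩, ?_⟩
  rw [ENNReal.ofReal_zero]
  have h : {t : ℝ | Phi R t ≤ 0} = {t | Phi R t = 0} := by
    ext t; simp [le_zero_iff]
  rw [h]
  exact atomless hR 0

lemma one_mem_Gs (hR : AEStrictTotalOrder R) : (1:ℝ) ∈ Gs R := by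
  refine ⟨⟨zero_le_one, le_refl 1⟩, ?_⟩
  rw [ENNReal.ofReal_one]
  have h : {t : ℝ | Phi R t ≤ 1} = univ := eq_univ_iff_forall.mpr (fun t => Phi_le_one t)
  rw [h, leb01_univ]

lemma mem_Gs_of_ae (hR : AEStrictTotalOrder R) :
    ∀ᵐ t ∂leb01, (Phi R t).toReal ∈ Gs R := by
  filter_upwards [id_ae hR] with t ht
  have hofr : ENNReal.ofReal (Phi R t).toReal = Phi R t := ENNReal.ofReal_toReal (Phi_ne_top t)
  refine ⟨⟨ENNReal.toReal_nonneg, ?_⟩, ?_⟩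
  · calc (Phi R t).toReal ≤ (1:ℝ≥0∞).toReal :=
        ENNReal.toReal_mono ENNReal.one_ne_top (Phi_le_one t)
    _ = 1 := ENNReal.toReal_one
  · rw [hofr]
    exact ht

lemma sSup_mem_Gs (hR : AEStrictTotalOrder R) {A : Set ℝ} (hA : A ⊆ Gs R)
    (hne : A.Nonempty) (hb : BddAbove A) : sSup A ∈ Gs R := by
  by_cases hmem : sSup A ∈ A
  · exact hA hmem
  set a := sSup A with ha
  have haIcc : a ∈ Icc (0:ℝ) 1 := by
    obtain ⟨u0, hu0⟩ := hne
    exact ⟨le_trans (hA hu0).1.1 (le_csSup hb hu0), csSup_le ⟨u0, hu0⟩ (fun u hu => (hA hu).1.2)⟩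
  obtain ⟨u, hmono, hlim, humem⟩ := exists_seq_tendsto_sSup hne hb
  have hult : ∀ n, u n < a :=
    fun n => lt_of_le_of_ne (le_csSup hb (humem n)) (fun h => hmem (h ▸ humem n))
  have hapos : 0 < a := lt_of_le_of_lt (hA (humem 0)).1.1 (hult 0)
  have hUeq : {t : ℝ | Phi R t < ENNReal.ofReal a}
      = ⋃ n, {t | Phi R t ≤ ENNReal.ofReal (u n)} := by
    ext t
    simp only [mem_iUnion, mem_setOf_eq]
    constructor
    · intro hlt
      have h1 : (Phi R t).toReal < a := by
        have h2 := (ENNReal.toReal_lt_toReal (Phi_ne_top t) ENNReal.ofReal_ne_top).mpr hlt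
        rwa [ENNReal.toReal_ofReal hapos.le] at h2
      obtain ⟨n, hn⟩ := (hlim.eventually (eventually_gt_nhds h1)).exists
      refine ⟨n, ?_⟩
      rw [← ENNReal.ofReal_toReal (Phi_ne_top t)]
      exact ENNReal.ofReal_le_ofReal hn.le
    · rintro ⟨n, hn⟩
      exact lt_of_le_of_lt hn ((ENNReal.ofReal_lt_ofReal_iff hapos).mpr (hult n))
  have hmonoS : Monotone (fun n => {t : ℝ | Phi R t ≤ ENNReal.ofReal (u n)}) := by
    intro i j hij t ht
    exact le_trans ht (ENNReal.ofReal_le_ofReal (hmono hij))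
  have htend := tendsto_measure_iUnion_atTop (μ := leb01) hmonoS
  have hcomp : (⇑leb01 ∘ fun n => {t : ℝ | Phi R t ≤ ENNReal.ofReal (u n)})
      = fun n => ENNReal.ofReal (u n) := funext fun n => (hA (humem n)).2
  rw [hcomp] at htend
  have hlim2 : Filter.Tendsto (fun n => ENNReal.ofReal (u n)) Filter.atTop
      (𝓝 (ENNReal.ofReal a)) := (ENNReal.continuous_ofReal.tendsto a).comp hlim
  have hUm : leb01 {t : ℝ | Phi R t < ENNReal.ofReal a} = ENNReal.ofReal a := by
    rw [hUeq]
    exact tendsto_nhds_unique htend hlim2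
  refine ⟨haIcc, ?_⟩
  have hmlt : MeasurableSet {t : ℝ | Phi R t < ENNReal.ofReal a} :=
    measurable_Phi hR.measurable measurableSet_Iio
  have hsplit := measure_inter_add_diff (μ := leb01)
    {t | Phi R t ≤ ENNReal.ofReal a} hmlt
  have hi : {t : ℝ | Phi R t ≤ ENNReal.ofReal a} ∩ {t | Phi R t < ENNReal.ofReal a}
      = {t | Phi R t < ENNReal.ofReal a} := by
    ext t; simp only [mem_inter_iff, mem_setOf_eq]
    exact ⟨fun h => h.2, fun h => ⟨h.le, h⟩⟩
  have hm0 : leb01 ({t : ℝ | Phi R t ≤ ENNReal.ofReal a}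
      \ {t | Phi R t < ENNReal.ofReal a}) = 0 := by
    refine measure_mono_null ?_ (atomless hR (ENNReal.ofReal a))
    rintro t ⟨ht1, ht2⟩
    exact le_antisymm ht1 (not_lt.mp ht2)
  rw [hi, hm0, add_zero] at hsplit
  rw [← hsplit, hUm]

lemma sInf_mem_Gs (hR : AEStrictTotalOrder R) {A : Set ℝ} (hA : A ⊆ Gs R)
    (hne : A.Nonempty) (hb : BddBelow A) : sInf A ∈ Gs R := by
  by_cases hmem : sInf A ∈ A
  · exact hA hmem
  set b := sInf A with hbdef
  have hbIcc : b ∈ Icc (0:ℝ) 1 := by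
    obtain ⟨u0, hu0⟩ := hne
    exact ⟨le_csInf ⟨u0, hu0⟩ (fun u hu => (hA hu).1.1), le_trans (csInf_le hb hu0) (hA hu0).1.2⟩
  obtain ⟨v, hanti, hlim, hvmem⟩ := exists_seq_tendsto_sInf hne hb
  have hvgt : ∀ n, b < v n :=
    fun n => lt_of_le_of_ne (csInf_le hb (hvmem n)) (fun h => hmem (h ▸ hvmem n))
  have hIeq : {t : ℝ | Phi R t ≤ ENNReal.ofReal b}
      = ⋂ n, {t | Phi R t ≤ ENNReal.ofReal (v n)} := by
    ext t
    simp only [mem_iInter, mem_setOf_eq]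
    constructor
    · intro h n
      exact le_trans h (ENNReal.ofReal_le_ofReal (hvgt n).le)
    · intro h
      have h1 : ∀ n, (Phi R t).toReal ≤ v n := fun n =>
        (ENNReal.le_ofReal_iff_toReal_le (Phi_ne_top t) (hA (hvmem n)).1.1).mp (h n)
      have h2 : (Phi R t).toReal ≤ b := ge_of_tendsto' hlim h1
      rw [← ENNReal.ofReal_toReal (Phi_ne_top t)]
      exact ENNReal.ofReal_le_ofReal h2
  have hantiS : Antitone (fun n => {t : ℝ | Phi R t ≤ ENNReal.ofReal (v n)}) := by
    intro i j hij t ht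
    exact le_trans ht (ENNReal.ofReal_le_ofReal (hanti hij))
  have htend := tendsto_measure_iInter_atTop (μ := leb01)
    (s := fun n => {t : ℝ | Phi R t ≤ ENNReal.ofReal (v n)})
    (fun n => (measurable_Phi hR.measurable measurableSet_Iic).nullMeasurableSet)
    hantiS ⟨0, measure_ne_top _ _⟩
  have hcomp : (⇑leb01 ∘ fun n => {t : ℝ | Phi R t ≤ ENNReal.ofReal (v n)})
      = fun n => ENNReal.ofReal (v n) := funext fun n => (hA (hvmem n)).2
  rw [hcomp] at htend
  have hlim2 : Filter.Tendsto (fun n => ENNReal.ofReal (v n)) Filter.atTop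
      (𝓝 (ENNReal.ofReal b)) := (ENNReal.continuous_ofReal.tendsto b).comp hlim
  refine ⟨hbIcc, ?_⟩
  rw [hIeq]
  exact tendsto_nhds_unique htend hlim2

lemma Gs_full (hR : AEStrictTotalOrder R) :
    ∀ s ∈ Icc (0:ℝ) 1, leb01 {t | Phi R t ≤ ENNReal.ofReal s} = ENNReal.ofReal s := by
  intro s hs
  by_contra hsbad
  have hsG : s ∉ Gs R := fun h => hsbad h.2
  have hAne : (Gs R ∩ Icc 0 s).Nonempty := ⟨0, zero_mem_Gs hR, le_refl 0, hs.1⟩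
  have hBne : (Gs R ∩ Icc s 1).Nonempty := ⟨1, one_mem_Gs hR, hs.2, le_refl 1⟩
  have hAbdd : BddAbove (Gs R ∩ Icc 0 s) := ⟨s, fun u hu => hu.2.2⟩
  have hBbdd : BddBelow (Gs R ∩ Icc s 1) := ⟨s, fun u hu => hu.2.1⟩
  set a := sSup (Gs R ∩ Icc 0 s) with hadef
  set b := sInf (Gs R ∩ Icc s 1) with hbdef
  have haG : a ∈ Gs R := sSup_mem_Gs hR inter_subset_left hAne hAbdd
  have hbG : b ∈ Gs R := sInf_mem_Gs hR inter_subset_left hBne hBbdd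
  have has : a ≤ s := csSup_le hAne (fun u hu => hu.2.2)
  have hsb : s ≤ b := le_csInf hBne (fun u hu => hu.2.1)
  have halt : a < s := lt_of_le_of_ne has (fun h => hsG (h ▸ haG))
  have hbgt : s < b := lt_of_le_of_ne hsb (fun h => hsG (h ▸ hbG))
  have hab : a ≤ b := le_trans has hsb
  have hmlea : MeasurableSet {t : ℝ | Phi R t ≤ ENNReal.ofReal a} :=
    measurable_Phi hR.measurable measurableSet_Iic
  have hsplit := measure_inter_add_diff (μ := leb01)
    {t | Phi R t ≤ ENNReal.ofReal b} hmlea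
  have hi : {t : ℝ | Phi R t ≤ ENNReal.ofReal b} ∩ {t | Phi R t ≤ ENNReal.ofReal a}
      = {t | Phi R t ≤ ENNReal.ofReal a} := by
    ext t; simp only [mem_inter_iff, mem_setOf_eq]
    exact ⟨fun h => h.2, fun h => ⟨le_trans h (ENNReal.ofReal_le_ofReal hab), h⟩⟩
  have hdiffnull : leb01 ({t : ℝ | Phi R t ≤ ENNReal.ofReal b}
      \ {t | Phi R t ≤ ENNReal.ofReal a}) = 0 := by
    have hsub : {t : ℝ | Phi R t ≤ ENNReal.ofReal b} \ {t | Phi R t ≤ ENNReal.ofReal a}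
        ⊆ {t | Phi R t = ENNReal.ofReal b} ∪ {t | ¬ (Phi R t).toReal ∈ Gs R} := by
      rintro t ⟨ht1, ht2⟩
      by_cases heq : Phi R t = ENNReal.ofReal b
      · exact Or.inl heq
      · right
        intro hmemG
        have hugt : a < (Phi R t).toReal := by
          have h' := (ENNReal.toReal_lt_toReal ENNReal.ofReal_ne_top (Phi_ne_top t)).mpr
            (not_le.mp ht2)
          rwa [ENNReal.toReal_ofReal haG.1.1] at h'
        have hult : (Phi R t).toReal < b := by
          have h' := (ENNReal.toReal_lt_toReal (Phi_ne_top t) ENNReal.ofReal_ne_top).mpr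
            (lt_of_le_of_ne ht1 heq)
          rwa [ENNReal.toReal_ofReal hbG.1.1] at h'
        rcases le_or_gt (Phi R t).toReal s with hus | hsu
        · have hmem : (Phi R t).toReal ∈ Gs R ∩ Icc 0 s :=
            ⟨hmemG, ENNReal.toReal_nonneg, hus⟩
          exact absurd (le_csSup hAbdd hmem) (not_le.mpr hugt)
        · have hmem : (Phi R t).toReal ∈ Gs R ∩ Icc s 1 := ⟨hmemG, hsu.le, hmemG.1.2⟩
          exact absurd (csInf_le hBbdd hmem) (not_le.mpr hult)
    refine measure_mono_null hsub (measure_union_null (atomless hR _) ?_)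
    exact ae_iff.mp (mem_Gs_of_ae hR)
  rw [hi, hdiffnull, add_zero] at hsplit
  have hofr : ENNReal.ofReal a = ENNReal.ofReal b := by
    rw [← haG.2, ← hbG.2, hsplit]
  have hab' : a = b := (ENNReal.ofReal_eq_ofReal_iff haG.1.1 hbG.1.1).mp hofr
  rw [hab'] at halt
  exact absurd halt (not_lt.mpr hbgt.le)

end Endgame

end RankAux

open RankAux in
/-- If `R` is an a.e. strict total order on `[0,1]`, its rank function `φ` is Borel measurable
and pushes Lebesgue measure on `[0,1]` forward to Lebesgue measure on `[0,1]`. -/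
theorem rankFun_measurePreserving (R : Set (ℝ × ℝ)) (hR : AEStrictTotalOrder R) :
    Measurable (rankFun R) ∧ leb01.map (rankFun R) = leb01 := by
  refine ⟨measurable_rankFun hR.measurable, ?_⟩
  haveI : IsFiniteMeasure (leb01.map (rankFun R)) :=
    Measure.isFiniteMeasure_map leb01 (rankFun R)
  refine Measure.ext_of_Iic _ _ (fun s => ?_)
  rw [Measure.map_apply (measurable_rankFun hR.measurable) measurableSet_Iic]
  have hpre : rankFun R ⁻¹' Iic s = {t | (Phi R t).toReal ≤ s} := by
    ext t; simp [rankFun_eq hR.measurable]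
  rw [hpre]
  have hRHS : leb01 (Iic s) = volume (Iic s ∩ Icc (0:ℝ) 1) := by
    rw [leb01, Measure.restrict_apply measurableSet_Iic]
  rcases lt_or_ge s 0 with hs | hs
  · have h1 : {t : ℝ | (Phi R t).toReal ≤ s} = ∅ :=
      eq_empty_iff_forall_notMem.mpr (fun t ht =>
        absurd (le_trans ENNReal.toReal_nonneg ht) (not_le.mpr hs))
    have h2 : Iic s ∩ Icc (0:ℝ) 1 = ∅ := by
      refine eq_empty_iff_forall_notMem.mpr ?_
      rintro x ⟨hx1, hx2, -⟩
      exact absurd (le_trans hx2 hx1) (not_le.mpr hs)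
    rw [h1, hRHS, h2, measure_empty, measure_empty]
  rcases le_or_gt s 1 with hs1 | hs1
  · have hset : {t : ℝ | (Phi R t).toReal ≤ s} = {t | Phi R t ≤ ENNReal.ofReal s} := by
      ext t
      exact ((ENNReal.le_ofReal_iff_toReal_le (Phi_ne_top t) hs).symm : _)
    have hIcc : Iic s ∩ Icc (0:ℝ) 1 = Icc 0 s := by
      ext x; simp only [mem_inter_iff, mem_Iic, mem_Icc]
      constructor
      · rintro ⟨h1, h2, -⟩; exact ⟨h2, h1⟩
      · rintro ⟨h1, h2⟩; exact ⟨h2, h1, le_trans h2 hs1⟩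
    rw [hset, Gs_full hR s ⟨hs, hs1⟩, hRHS, hIcc, Real.volume_Icc, sub_zero]
  · have hset : {t : ℝ | (Phi R t).toReal ≤ s} = univ :=
      eq_univ_iff_forall.mpr (fun t => le_trans
        (by calc (Phi R t).toReal ≤ (1:ℝ≥0∞).toReal :=
              ENNReal.toReal_mono ENNReal.one_ne_top (Phi_le_one t)
            _ = 1 := ENNReal.toReal_one) hs1.le)
    have hIcc : Iic s ∩ Icc (0:ℝ) 1 = Icc 0 1 := by
      ext x; simp only [mem_inter_iff, mem_Iic, mem_Icc]
      constructor
      · rintro ⟨-, h⟩; exact h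
      · rintro ⟨h1, h2⟩; exact ⟨le_trans h2 hs1.le, h1, h2⟩
    rw [hset, leb01_univ, hRHS, hIcc, Real.volume_Icc, sub_zero, ENNReal.ofReal_one]
end

section
/- Let R ⊆ [0,1]×[0,1] be a Borel set which is an almost-everywhere strict total order, and let φ(t) := Leb{x ∈ [0,1] : (x,t) ∈ R} be its rank function. Then the pushforward of Lebesgue measure on [0,1] under the map t ↦ (t, φ(t)) is a permuton, i.e. it is a Borel probability measure on [0,1]² whose pushforwards under both coordinate projections equal Lebesgue measure on [0,1]. -/
open MeasureTheory Set
open scoped ENNReal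

instance : IsProbabilityMeasure leb01 := by
  constructor
  simp [leb01, Real.volume_Icc]

instance : NullSingletonClass leb01 := by
  unfold leb01; infer_instance

namespace PermutonAux

variable {R : Set (ℝ × ℝ)}

/-- left section of `R` at `t` -/
def sec (R : Set (ℝ × ℝ)) (t : ℝ) : Set ℝ := {x | (x, t) ∈ R}

/-- right section of `R` at `s` -/
def sec' (R : Set (ℝ × ℝ)) (s : ℝ) : Set ℝ := {t | (s, t) ∈ R}

noncomputable def phi (R : Set (ℝ × ℝ)) (t : ℝ) : ℝ≥0∞ := leb01 (sec R t)

lemma m_sec (hR : MeasurableSet R) (t : ℝ) : MeasurableSet (sec R t) :=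
  measurable_prodMk_right hR

lemma m_sec' (hR : MeasurableSet R) (s : ℝ) : MeasurableSet (sec' R s) :=
  measurable_prodMk_left hR

lemma phi_meas (hR : MeasurableSet R) : Measurable (phi R) :=
  measurable_measure_prodMk_right hR

lemma phi_le_one (t : ℝ) : phi R t ≤ 1 :=
  le_trans (measure_mono (subset_univ (sec R t))) (le_of_eq measure_univ)

lemma phi_ne_top (t : ℝ) : phi R t ≠ ∞ :=
  fun h => by simpa [h] using phi_le_one (R := R) t

lemma rank_eq (hR : MeasurableSet R) (t : ℝ) : rankFun R t = (phi R t).toReal := by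
  unfold rankFun phi leb01
  rw [Measure.restrict_apply (m_sec hR t)]
  congr 2
  ext x
  simp [sec, and_comm]

lemma phi_eq_ofReal (hR : MeasurableSet R) (t : ℝ) :
    phi R t = ENNReal.ofReal (rankFun R t) := by
  rw [rank_eq hR, ENNReal.ofReal_toReal (phi_ne_top t)]

lemma rank_meas (hR : MeasurableSet R) : Measurable (rankFun R) := by
  have : rankFun R = fun t => (phi R t).toReal := funext (rank_eq hR)
  rw [this]
  exact (phi_meas hR).ennreal_toReal

lemma rank_nonneg (hR : MeasurableSet R) (t : ℝ) : 0 ≤ rankFun R t := by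
  rw [rank_eq hR]; exact ENNReal.toReal_nonneg

lemma rank_le_one (hR : MeasurableSet R) (t : ℝ) : rankFun R t ≤ 1 := by
  rw [rank_eq hR]
  exact ENNReal.toReal_le_of_le_ofReal zero_le_one (by simpa using phi_le_one t)

lemma mono_ae (hR : AEStrictTotalOrder R) :
    ∀ᵐ p ∂(leb01.prod leb01), (p.1, p.2) ∈ R → phi R p.1 ≤ phi R p.2 := by
  have h := hR.trans
  rw [← Measure.prod_swap] at h
  have h2 := ae_of_ae_map measurable_swap.aemeasurable h
  have h3 := Measure.ae_ae_of_ae_prod h2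
  filter_upwards [h3] with w hw hmem
  refine measure_mono_ae ?_
  filter_upwards [hw] with z hz hzs
  exact hz hzs hmem

lemma mono_ae' (hR : AEStrictTotalOrder R) :
    ∀ᵐ p ∂(leb01.prod leb01), (p.2, p.1) ∈ R → phi R p.2 ≤ phi R p.1 := by
  have h := mono_ae hR
  rw [← Measure.prod_swap] at h
  exact ae_of_ae_map measurable_swap.aemeasurable h

lemma strict_ae (hR : AEStrictTotalOrder R) :
    ∀ᵐ p ∂(leb01.prod leb01), phi R p.1 < phi R p.2 → (p.1, p.2) ∈ R := by
  filter_upwards [mono_ae' hR, hR.total] with p h1 h2 hlt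
  have hne : p.1 ≠ p.2 := fun h => absurd hlt (by rw [h]; exact lt_irrefl _)
  rcases h2 hne with ⟨h, _⟩ | ⟨h, _⟩
  · exact h
  · exact absurd hlt (not_lt.2 (h1 h))

lemma sandwich_t (hR : AEStrictTotalOrder R) :
    ∀ᵐ t ∂leb01, ∀ᵐ x ∂leb01,
      ((x, t) ∈ R → phi R x ≤ phi R t) ∧ (phi R x < phi R t → (x, t) ∈ R) := by
  have h := (mono_ae hR).and (strict_ae hR)
  rw [← Measure.prod_swap] at h
  have h2 := ae_of_ae_map measurable_swap.aemeasurable h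
  exact Measure.ae_ae_of_ae_prod h2

lemma total_tx (hR : AEStrictTotalOrder R) :
    ∀ᵐ t ∂leb01, ∀ᵐ x ∂leb01, x ≠ t → Xor' ((x, t) ∈ R) ((t, x) ∈ R) := by
  have h := hR.total
  rw [← Measure.prod_swap] at h
  have h2 := ae_of_ae_map measurable_swap.aemeasurable h
  exact Measure.ae_ae_of_ae_prod h2

lemma rank_lt_iff (hR : MeasurableSet R) {x t : ℝ} :
    rankFun R x < rankFun R t ↔ phi R x < phi R t := by
  rw [rank_eq hR, rank_eq hR]
  exact ENNReal.toReal_lt_toReal (phi_ne_top x) (phi_ne_top t)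

lemma rank_le_iff (hR : MeasurableSet R) {x t : ℝ} :
    rankFun R x ≤ rankFun R t ↔ phi R x ≤ phi R t := by
  rw [rank_eq hR, rank_eq hR]
  exact ENNReal.toReal_le_toReal (phi_ne_top x) (phi_ne_top t)

lemma meas_nu_Iio : Measurable fun y => (leb01.map (rankFun R)) (Iio y) :=
  Monotone.measurable (fun _ _ h => measure_mono (Iio_subset_Iio h))

lemma meas_nu_Iic : Measurable fun y => (leb01.map (rankFun R)) (Iic y) :=
  Monotone.measurable (fun _ _ h => measure_mono (Iic_subset_Iic.2 h))

lemma key_t (hR : AEStrictTotalOrder R) :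
    ∀ᵐ t ∂leb01,
      (leb01.map (rankFun R)) (Iio (rankFun R t)) ≤ ENNReal.ofReal (rankFun R t) ∧
      ENNReal.ofReal (rankFun R t) ≤ (leb01.map (rankFun R)) (Iic (rankFun R t)) := by
  have hmR := hR.measurable
  filter_upwards [sandwich_t hR] with t ht
  have hIio : (leb01.map (rankFun R)) (Iio (rankFun R t)) = leb01 {x | phi R x < phi R t} := by
    rw [Measure.map_apply (rank_meas hmR) measurableSet_Iio]
    congr 1
    ext x
    simp only [mem_preimage, mem_Iio, mem_setOf_eq, rank_lt_iff hmR]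
  have hIic : (leb01.map (rankFun R)) (Iic (rankFun R t)) = leb01 {x | phi R x ≤ phi R t} := by
    rw [Measure.map_apply (rank_meas hmR) measurableSet_Iic]
    congr 1
    ext x
    simp only [mem_preimage, mem_Iic, mem_setOf_eq, rank_le_iff hmR]
  have hofReal : ENNReal.ofReal (rankFun R t) = phi R t := (phi_eq_ofReal hmR t).symm
  constructor
  · rw [hIio, hofReal]
    refine measure_mono_ae ?_
    filter_upwards [ht] with x hx hlt
    exact hx.2 hlt
  · rw [hIic, hofReal]
    show phi R t ≤ _
    refine measure_mono_ae ?_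
    filter_upwards [ht] with x hx hmem
    exact hx.1 hmem

lemma key_y (hR : AEStrictTotalOrder R) :
    ∀ᵐ y ∂(leb01.map (rankFun R)),
      (leb01.map (rankFun R)) (Iio y) ≤ ENNReal.ofReal y ∧
      ENNReal.ofReal y ≤ (leb01.map (rankFun R)) (Iic y) := by
  have hs : MeasurableSet {y : ℝ |
      (leb01.map (rankFun R)) (Iio y) ≤ ENNReal.ofReal y ∧
      ENNReal.ofReal y ≤ (leb01.map (rankFun R)) (Iic y)} := by
    exact (measurableSet_le (meas_nu_Iio (R := R)) ENNReal.measurable_ofReal).inter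
      (measurableSet_le (α := ℝ≥0∞) ENNReal.measurable_ofReal (meas_nu_Iic (R := R)))
  exact (ae_map_iff (rank_meas hR.measurable).aemeasurable hs).2 (key_t hR)

lemma xor_iff' {a b : Prop} (h : Xor' a b) : a ↔ ¬ b :=
  ⟨fun ha hb => h.elim (fun x => x.2 hb) (fun x => x.2 ha),
   fun hnb => h.elim (fun x => x.1) (fun x => absurd x.1 hnb)⟩

lemma mp_swap23 : MeasurePreserving (fun p : ℝ × ℝ × ℝ => (p.1, p.2.2, p.2.1))
    (leb01.prod (leb01.prod leb01)) (leb01.prod (leb01.prod leb01)) :=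
  (MeasurePreserving.id leb01).prod Measure.measurePreserving_swap

lemma mp_swap12 : MeasurePreserving (fun p : ℝ × ℝ × ℝ => (p.2.1, p.1, p.2.2))
    (leb01.prod (leb01.prod leb01)) (leb01.prod (leb01.prod leb01)) := by
  have h1 := (measurePreserving_prodAssoc leb01 leb01 leb01).symm
    (e := MeasurableEquiv.prodAssoc)
  have h2 : MeasurePreserving (Prod.map Prod.swap (id : ℝ → ℝ))
      ((leb01.prod leb01).prod leb01) ((leb01.prod leb01).prod leb01) :=
    Measure.measurePreserving_swap.prod (MeasurePreserving.id _)
  have h3 := (measurePreserving_prodAssoc leb01 leb01 leb01).comp (h2.comp h1)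
  exact h3

lemma mp_perm (g : ℝ × ℝ × ℝ → ℝ × ℝ × ℝ)
    (hg : MeasurePreserving g (leb01.prod (leb01.prod leb01)) (leb01.prod (leb01.prod leb01)))
    {p : ℝ × ℝ × ℝ → Prop} (h : ∀ᵐ q ∂(leb01.prod (leb01.prod leb01)), p q) :
    ∀ᵐ q ∂(leb01.prod (leb01.prod leb01)), p (g q) := by
  rw [← hg.map_eq] at h
  exact ae_of_ae_map hg.aemeasurable h

lemma trans_all (hR : AEStrictTotalOrder R) :
    ∀ᵐ p ∂(leb01.prod (leb01.prod leb01)),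
      ((p.1, p.2.1) ∈ R → (p.2.1, p.2.2) ∈ R → (p.1, p.2.2) ∈ R) ∧
      ((p.1, p.2.2) ∈ R → (p.2.2, p.2.1) ∈ R → (p.1, p.2.1) ∈ R) ∧
      ((p.2.1, p.1) ∈ R → (p.1, p.2.2) ∈ R → (p.2.1, p.2.2) ∈ R) ∧
      ((p.2.1, p.2.2) ∈ R → (p.2.2, p.1) ∈ R → (p.2.1, p.1) ∈ R) ∧
      ((p.2.2, p.1) ∈ R → (p.1, p.2.1) ∈ R → (p.2.2, p.2.1) ∈ R) ∧
      ((p.2.2, p.2.1) ∈ R → (p.2.1, p.1) ∈ R → (p.2.2, p.1) ∈ R) := by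
  have h1 := hR.trans
  have h2 := mp_perm _ mp_swap23 h1
  have h3 := mp_perm _ mp_swap12 h1
  have h4 := mp_perm _ (mp_swap23.comp mp_swap12) h1
  have h5 := mp_perm _ (mp_swap12.comp mp_swap23) h1
  have h6 := mp_perm _ ((mp_swap23.comp mp_swap12).comp mp_swap23) h1
  filter_upwards [h1, h2, h3, h4, h5, h6] with p g1 g2 g3 g4 g5 g6
  exact ⟨g1, g2, g3, g4, g5, g6⟩

lemma ne_ae (hR : AEStrictTotalOrder R) :
    ∀ᵐ q ∂(leb01.prod leb01), q.1 ≠ q.2 := by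
  rw [ae_iff]
  have hms : MeasurableSet {q : ℝ × ℝ | q.1 = q.2} :=
    measurableSet_eq_fun measurable_fst measurable_snd
  have : {q : ℝ × ℝ | ¬ q.1 ≠ q.2} = {q : ℝ × ℝ | q.1 = q.2} := by
    ext q; simp
  rw [this, Measure.prod_apply hms]
  have : ∀ x : ℝ, leb01 (Prod.mk x ⁻¹' {q : ℝ × ℝ | q.1 = q.2}) = 0 := by
    intro x
    have : Prod.mk x ⁻¹' {q : ℝ × ℝ | q.1 = q.2} = {x} := by
      ext z; simp [eq_comm]
    rw [this]
    exact measure_singleton x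
  simp [this]

lemma pattern_excl {α : Type*} {r : α → α → Prop} {x s t : α}
    (o12 : Xor' (r x s) (r s x)) (o13 : Xor' (r x t) (r t x)) (o23 : Xor' (r s t) (r t s))
    (t1 : r x s → r s t → r x t) (t2 : r x t → r t s → r x s)
    (t3 : r s x → r x t → r s t) (t4 : r s t → r t x → r s x)
    (t5 : r t x → r x s → r t s) (t6 : r t s → r s x → r t x) :
    (¬((r x s ∧ r s t) ∧ (r x t ∧ r t s))) ∧
    (¬((r x s ∧ r s t) ∧ (r s x ∧ r x t))) ∧
    (¬((r x s ∧ r s t) ∧ (r s t ∧ r t x))) ∧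
    (¬((r x s ∧ r s t) ∧ (r t x ∧ r x s))) ∧
    (¬((r x s ∧ r s t) ∧ (r t s ∧ r s x))) ∧
    (¬((r x t ∧ r t s) ∧ (r s x ∧ r x t))) ∧
    (¬((r x t ∧ r t s) ∧ (r s t ∧ r t x))) ∧
    (¬((r x t ∧ r t s) ∧ (r t x ∧ r x s))) ∧
    (¬((r x t ∧ r t s) ∧ (r t s ∧ r s x))) ∧
    (¬((r s x ∧ r x t) ∧ (r s t ∧ r t x))) ∧
    (¬((r s x ∧ r x t) ∧ (r t x ∧ r x s))) ∧
    (¬((r s x ∧ r x t) ∧ (r t s ∧ r s x))) ∧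
    (¬((r s t ∧ r t x) ∧ (r t x ∧ r x s))) ∧
    (¬((r s t ∧ r t x) ∧ (r t s ∧ r s x))) ∧
    (¬((r t x ∧ r x s) ∧ (r t s ∧ r s x))) := by
  have i12 := xor_iff' o12
  have i13 := xor_iff' o13
  have i23 := xor_iff' o23
  refine ⟨?_, ?_, ?_, ?_, ?_, ?_, ?_, ?_, ?_, ?_, ?_, ?_, ?_, ?_, ?_⟩
  · exact fun ⟨⟨_, hst⟩, ⟨_, hts⟩⟩ => (i23.1 hst) hts
  · exact fun ⟨⟨hxs, _⟩, ⟨hsx, _⟩⟩ => (i12.1 hxs) hsx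
  · exact fun ⟨⟨hxs, hst⟩, ⟨_, htx⟩⟩ => (i13.1 (t1 hxs hst)) htx
  · exact fun ⟨⟨hxs, hst⟩, ⟨htx, _⟩⟩ => (i13.1 (t1 hxs hst)) htx
  · exact fun ⟨⟨hxs, _⟩, ⟨_, hsx⟩⟩ => (i12.1 hxs) hsx
  · exact fun ⟨⟨hxt, hts⟩, ⟨hsx, _⟩⟩ => (i12.1 (t2 hxt hts)) hsx
  · exact fun ⟨⟨_, hts⟩, ⟨hst, _⟩⟩ => (i23.1 hst) hts
  · exact fun ⟨⟨hxt, _⟩, ⟨htx, _⟩⟩ => (i13.1 hxt) htx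
  · exact fun ⟨⟨hxt, hts⟩, ⟨_, hsx⟩⟩ => (i12.1 (t2 hxt hts)) hsx
  · exact fun ⟨⟨_, hxt⟩, ⟨_, htx⟩⟩ => (i13.1 hxt) htx
  · exact fun ⟨⟨_, hxt⟩, ⟨htx, _⟩⟩ => (i13.1 hxt) htx
  · exact fun ⟨⟨hsx, hxt⟩, ⟨hts, _⟩⟩ => (i23.1 (t3 hsx hxt)) hts
  · exact fun ⟨⟨hst, _⟩, ⟨htx, hxs⟩⟩ => (i23.1 hst) (t5 htx hxs)
  · exact fun ⟨⟨hst, _⟩, ⟨hts, _⟩⟩ => (i23.1 hst) hts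
  · exact fun ⟨⟨_, hxs⟩, ⟨_, hsx⟩⟩ => (i12.1 hxs) hsx

set_option maxHeartbeats 1000000 in
theorem atomless (hR : AEStrictTotalOrder R) (y : ℝ) :
    (leb01.map (rankFun R)) {y} = 0 := by
  have hmR := hR.measurable
  by_contra hA0
  set A := rankFun R ⁻¹' {y} with hAdef
  have hAm : MeasurableSet A := (rank_meas hmR) (measurableSet_singleton y)
  have hmap : (leb01.map (rankFun R)) {y} = leb01 A :=
    Measure.map_apply (rank_meas hmR) (measurableSet_singleton y)
  set a := leb01 A with hadef
  have ha0 : a ≠ 0 := fun h => hA0 (by rw [hmap, h])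
  have haT : a ≠ ∞ := measure_ne_top _ _
  -- y is in [0,1]
  have hAne : A.Nonempty := by
    by_contra h
    rw [not_nonempty_iff_eq_empty] at h
    exact ha0 (by rw [hadef, h, measure_empty])
  obtain ⟨t₀, ht₀⟩ := hAne
  have hy0 : 0 ≤ y := by
    have : rankFun R t₀ = y := ht₀
    rw [← this]; exact rank_nonneg hmR t₀
  set κ := leb01.restrict A with hκdef
  have hκuniv : κ univ = a := by rw [hκdef, Measure.restrict_apply_univ]
  haveI : IsFiniteMeasure κ := by
    constructor; rw [hκuniv]; exact haT.lt_top
  set U := rankFun R ⁻¹' (Iio y) with hUdef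
  have hUm : MeasurableSet U := (rank_meas hmR) measurableSet_Iio
  set V := rankFun R ⁻¹' (Ioi y) with hVdef
  have hVm : MeasurableSet V := (rank_meas hmR) measurableSet_Ioi
  set b := leb01 U with hbdef
  have hbT : b ≠ ∞ := measure_ne_top _ _
  -- main identity:  ofReal y = b + κ (sec R t)  a.e. t ∂κ
  have hsand : ∀ᵐ t ∂κ, ENNReal.ofReal y = b + κ (sec R t) := by
    filter_upwards [ae_restrict_of_ae (sandwich_t hR), ae_restrict_mem hAm] with t ht htA
    have hty : rankFun R t = y := htA
    have hphit : phi R t = ENNReal.ofReal y := by rw [phi_eq_ofReal hmR, hty]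
    have hbadnull : leb01 {x : ℝ | ¬ (((x, t) ∈ R → phi R x ≤ phi R t) ∧
        (phi R x < phi R t → (x, t) ∈ R))} = 0 := ae_iff.1 ht
    have hV0 : leb01 (sec R t ∩ V) = 0 := by
      refine measure_mono_null ?_ hbadnull
      intro x hx
      intro hc
      have h1 : phi R x ≤ phi R t := hc.1 hx.1
      have h2 : rankFun R x ≤ rankFun R t := (rank_le_iff hmR).2 h1
      rw [hty] at h2
      exact absurd h2 (not_le.2 (show y < rankFun R x from hx.2))
    have hU0 : leb01 (U \ sec R t) = 0 := by
      refine measure_mono_null ?_ hbadnull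
      intro x hx
      intro hc
      refine hx.2 (hc.2 ?_)
      have hlt : rankFun R x < rankFun R t := by
        rw [hty]; exact hx.1
      exact (rank_lt_iff hmR).1 hlt
    have hUAV : U ∪ A ∪ V = univ := by
      ext x
      simp only [mem_union, mem_univ, iff_true, hUdef, hAdef, hVdef, mem_preimage,
        mem_Iio, mem_singleton_iff, mem_Ioi]
      rcases lt_trichotomy (rankFun R x) y with h | h | h
      · exact Or.inl (Or.inl h)
      · exact Or.inl (Or.inr h)
      · exact Or.inr h
    have hdecomp : leb01 (sec R t) =
        leb01 (sec R t ∩ U) + leb01 (sec R t ∩ A) + leb01 (sec R t ∩ V) := by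
      have h1 : sec R t = (sec R t ∩ U ∪ sec R t ∩ A) ∪ sec R t ∩ V := by
        rw [← inter_union_distrib_left, ← inter_union_distrib_left, hUAV, inter_univ]
      conv_lhs => rw [h1]
      rw [measure_union ?disj1 (m_sec hmR t |>.inter hVm)]
      rw [measure_union ?disj2 (m_sec hmR t |>.inter hAm)]
      case disj1 =>
        rw [Set.disjoint_left]
        rintro x (hx | hx) hx'
        · exact absurd (lt_trans (show rankFun R x < y from hx.2)
            (show y < rankFun R x from hx'.2)) (lt_irrefl _)
        · have h1' : rankFun R x = y := hx.2
          have h2' : y < rankFun R x := hx'.2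
          rw [h1'] at h2'
          exact lt_irrefl y h2'
      case disj2 =>
        rw [Set.disjoint_left]
        intro x hx hx'
        have h1' : rankFun R x < y := hx.2
        have h2' : rankFun R x = y := hx'.2
        rw [h2'] at h1'
        exact lt_irrefl y h1'
    have hsecU : leb01 (sec R t ∩ U) = b := by
      have h1 : leb01 (U ∩ sec R t) + leb01 (U \ sec R t) = leb01 U :=
        measure_inter_add_diff U (m_sec hmR t)
      rw [hU0, add_zero] at h1
      rw [inter_comm] at h1
      exact h1
    have hsecA : leb01 (sec R t ∩ A) = κ (sec R t) := by
      rw [hκdef, Measure.restrict_apply (m_sec hmR t)]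
    rw [← hphit]
    show phi R t = _
    rw [phi]
    rw [hdecomp, hsecU, hsecA, hV0, add_zero]
  have hκne : (MeasureTheory.ae κ).NeBot := by
    rw [ae_neBot]
    intro h
    rw [h] at hκuniv
    exact ha0 (by rw [← hκuniv]; rfl)
  obtain ⟨tw, htw⟩ := hsand.exists
  set c := κ (sec R tw) with hcdef
  have hcT : c ≠ ∞ := measure_ne_top _ _
  have hca : c ≤ a := by rw [← hκuniv]; exact measure_mono (subset_univ _)
  have hc : ∀ᵐ t ∂κ, κ (sec R t) = c := by
    filter_upwards [hsand] with t ht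
    have := ht.symm.trans htw
    exact WithTop.add_left_cancel hbT this
  -- totality within A
  have htot2 : ∀ᵐ t ∂κ, ∀ᵐ x ∂κ, x ≠ t → Xor' ((x, t) ∈ R) ((t, x) ∈ R) := by
    refine ae_restrict_of_ae ?_
    filter_upwards [total_tx hR] with t ht
    exact ae_restrict_of_ae ht
  have hκsingleton : ∀ t : ℝ, κ {t} = 0 := by
    intro t
    rw [hκdef, Measure.restrict_apply (measurableSet_singleton t)]
    exact measure_mono_null inter_subset_left (measure_singleton t)
  have hsum : ∀ᵐ t ∂κ, κ (sec R t) + κ (sec' R t) = a := by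
    filter_upwards [htot2] with t ht
    have hne : ∀ᵐ x ∂κ, x ≠ t := by
      rw [ae_iff]
      have : {x : ℝ | ¬ x ≠ t} = {t} := by ext z; simp
      rw [this]
      exact hκsingleton t
    have hdisj : κ (sec R t ∩ sec' R t) = 0 := by
      rw [measure_eq_zero_iff_ae_notMem]
      filter_upwards [ht, hne] with x hx hxne
      rintro ⟨h1, h2⟩
      rcases hx hxne with ⟨_, hn⟩ | ⟨_, hn⟩
      · exact hn h2
      · exact hn h1
    have hunion : κ (sec R t ∪ sec' R t) = a := by
      have hcompl : κ (sec R t ∪ sec' R t)ᶜ = 0 := by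
        rw [measure_eq_zero_iff_ae_notMem]
        filter_upwards [ht, hne] with x hx hxne
        intro hmem
        rcases hx hxne with ⟨h1, _⟩ | ⟨h1, _⟩
        · exact hmem (Or.inl h1)
        · exact hmem (Or.inr h1)
      have := measure_add_measure_compl (μ := κ) ((m_sec hmR t).union (m_sec' hmR t))
      rw [hcompl, add_zero] at this
      rw [this, hκuniv]
    have := measure_union_add_inter (μ := κ) (sec R t) (m_sec' hmR t)
    rw [hunion, hdisj, add_zero] at this
    exact this.symm
  set d := a - c with hddef
  have hdT : d ≠ ∞ := by
    rw [hddef]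
    exact (tsub_le_self.trans_lt haT.lt_top).ne
  have hcd : c + d = a := add_tsub_cancel_of_le hca
  have hd : ∀ᵐ t ∂κ, κ (sec' R t) = d := by
    filter_upwards [hsum, hc] with t h1 h2
    rw [h2] at h1
    rw [hddef, ← h1, ENNReal.add_sub_cancel_left hcT]
  -- the swap identity gives c = d
  have hint1 : ∫⁻ t, κ (sec R t) ∂κ = c * a := by
    rw [lintegral_congr_ae hc, lintegral_const, hκuniv]
  have hint2 : ∫⁻ t, κ (sec' R t) ∂κ = d * a := by
    rw [lintegral_congr_ae hd, lintegral_const, hκuniv]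
  have hswap1 : (κ.prod κ) R = ∫⁻ x, κ (sec' R x) ∂κ := Measure.prod_apply hmR
  have hswap2 : (κ.prod κ) R = ∫⁻ x, κ (sec R x) ∂κ := by
    conv_lhs => rw [← Measure.prod_swap]
    rw [Measure.map_apply measurable_swap hmR,
      Measure.prod_apply (measurable_swap hmR)]
    rfl
  have hceqd : c = d := by
    have h1 : c * a = d * a := by rw [← hint1, ← hswap2, hswap1, hint2]
    have := ENNReal.mul_le_mul_iff_left (a := c) (b := d) ha0 haT
    have h2 : c ≤ d := this.1 h1.le
    have h3 : d ≤ c := (ENNReal.mul_le_mul_iff_left (a := d) (b := c) ha0 haT).1 h1.ge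
    exact le_antisymm h2 h3
  have hc0 : c ≠ 0 := by
    intro h
    apply ha0
    rw [← hcd, ← hceqd, h, add_zero]
  have hd' : ∀ᵐ t ∂κ, κ (sec' R t) = c := by
    filter_upwards [hd] with t h
    rw [h, ← hceqd]
  -- measurability helpers
  have mx : Measurable fun p : ℝ × ℝ × ℝ => p.1 := measurable_fst
  have ms : Measurable fun p : ℝ × ℝ × ℝ => p.2.1 := measurable_fst.comp measurable_snd
  have mt : Measurable fun p : ℝ × ℝ × ℝ => p.2.2 := measurable_snd.comp measurable_snd
  have mpair : ∀ (f g : ℝ × ℝ × ℝ → ℝ), Measurable f → Measurable g →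
      MeasurableSet {p : ℝ × ℝ × ℝ | (f p, g p) ∈ R} :=
    fun f g hf hg => (hf.prodMk hg) hmR
  have mpair2 : ∀ (f g : ℝ × ℝ → ℝ), Measurable f → Measurable g →
      MeasurableSet {q : ℝ × ℝ | (f q, g q) ∈ R} :=
    fun f g hf hg => (hf.prodMk hg) hmR
  -- inner integrals
  have hinner1 : ∀ x : ℝ, (κ.prod κ) {q : ℝ × ℝ | (x, q.1) ∈ R ∧ (q.1, q.2) ∈ R}
      = c * κ (sec' R x) := by
    intro x
    have hm : MeasurableSet {q : ℝ × ℝ | (x, q.1) ∈ R ∧ (q.1, q.2) ∈ R} := by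
      rw [setOf_and]
      exact (mpair2 _ _ measurable_const measurable_fst).inter
        (mpair2 _ _ measurable_fst measurable_snd)
    rw [Measure.prod_apply hm]
    have heq : (fun s => κ (Prod.mk s ⁻¹' {q : ℝ × ℝ | (x, q.1) ∈ R ∧ (q.1, q.2) ∈ R}))
        =ᵐ[κ] (sec' R x).indicator (fun _ => c) := by
      filter_upwards [hd'] with s hs
      by_cases hxs : (x, s) ∈ R
      · have h1 : Prod.mk s ⁻¹' {q : ℝ × ℝ | (x, q.1) ∈ R ∧ (q.1, q.2) ∈ R} = sec' R s := by
          ext z; simp [sec', hxs]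
        rw [h1, hs, indicator_of_mem (show s ∈ sec' R x from hxs)]
      · have h1 : Prod.mk s ⁻¹' {q : ℝ × ℝ | (x, q.1) ∈ R ∧ (q.1, q.2) ∈ R} = ∅ := by
          ext z; simp [hxs]
        rw [h1, measure_empty, indicator_of_notMem (show s ∉ sec' R x from hxs)]
    rw [lintegral_congr_ae heq, lintegral_indicator (m_sec' hmR x), setLIntegral_const]
  have hinner2 : ∀ x : ℝ, (κ.prod κ) {q : ℝ × ℝ | (q.2, q.1) ∈ R ∧ (q.1, x) ∈ R}
      = c * κ (sec R x) := by
    intro x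
    have hm : MeasurableSet {q : ℝ × ℝ | (q.2, q.1) ∈ R ∧ (q.1, x) ∈ R} := by
      rw [setOf_and]
      exact (mpair2 _ _ measurable_snd measurable_fst).inter
        (mpair2 _ _ measurable_fst measurable_const)
    rw [Measure.prod_apply hm]
    have heq : (fun t => κ (Prod.mk t ⁻¹' {q : ℝ × ℝ | (q.2, q.1) ∈ R ∧ (q.1, x) ∈ R}))
        =ᵐ[κ] (sec R x).indicator (fun _ => c) := by
      filter_upwards [hc] with t hts
      by_cases htx : (t, x) ∈ R
      · have h1 : Prod.mk t ⁻¹' {q : ℝ × ℝ | (q.2, q.1) ∈ R ∧ (q.1, x) ∈ R} = sec R t := by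
          ext z; simp [sec, htx]
        rw [h1, hts, indicator_of_mem (show t ∈ sec R x from htx)]
      · have h1 : Prod.mk t ⁻¹' {q : ℝ × ℝ | (q.2, q.1) ∈ R ∧ (q.1, x) ∈ R} = ∅ := by
          ext z; simp [htx]
        rw [h1, measure_empty, indicator_of_notMem (show t ∉ sec R x from htx)]
    rw [lintegral_congr_ae heq, lintegral_indicator (m_sec hmR x), setLIntegral_const]
  have hIsec' : ∫⁻ x, c * κ (sec' R x) ∂κ = c * c * a := by
    have heq : (fun x => c * κ (sec' R x)) =ᵐ[κ] fun _ => c * c := by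
      filter_upwards [hd'] with x hx; rw [hx]
    rw [lintegral_congr_ae heq, lintegral_const, hκuniv]
  have hIsec : ∫⁻ x, c * κ (sec R x) ∂κ = c * c * a := by
    have heq : (fun x => c * κ (sec R x)) =ᵐ[κ] fun _ => c * c := by
      filter_upwards [hc] with x hx; rw [hx]
    rw [lintegral_congr_ae heq, lintegral_const, hκuniv]
  have hIrect : ∫⁻ x, κ (sec R x) * κ (sec' R x) ∂κ = c * c * a := by
    have heq : (fun x => κ (sec R x) * κ (sec' R x)) =ᵐ[κ] fun _ => c * c := by
      filter_upwards [hc, hd'] with x hx hx'; rw [hx, hx']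
    rw [lintegral_congr_ae heq, lintegral_const, hκuniv]
  have hIrect' : ∫⁻ x, κ (sec' R x) * κ (sec R x) ∂κ = c * c * a := by
    have heq : (fun x => κ (sec' R x) * κ (sec R x)) =ᵐ[κ] fun _ => c * c := by
      filter_upwards [hc, hd'] with x hx hx'; rw [hx, hx', mul_comm]
    rw [lintegral_congr_ae heq, lintegral_const, hκuniv]
  -- the six pattern sets
  set P3 := κ.prod (κ.prod κ) with hP3def
  set E1 : Set (ℝ × ℝ × ℝ) := {p | (p.1, p.2.1) ∈ R ∧ (p.2.1, p.2.2) ∈ R} with hE1def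
  set E2 : Set (ℝ × ℝ × ℝ) := {p | (p.1, p.2.2) ∈ R ∧ (p.2.2, p.2.1) ∈ R} with hE2def
  set E3 : Set (ℝ × ℝ × ℝ) := {p | (p.2.1, p.1) ∈ R ∧ (p.1, p.2.2) ∈ R} with hE3def
  set E4 : Set (ℝ × ℝ × ℝ) := {p | (p.2.1, p.2.2) ∈ R ∧ (p.2.2, p.1) ∈ R} with hE4def
  set E5 : Set (ℝ × ℝ × ℝ) := {p | (p.2.2, p.1) ∈ R ∧ (p.1, p.2.1) ∈ R} with hE5def
  set E6 : Set (ℝ × ℝ × ℝ) := {p | (p.2.2, p.2.1) ∈ R ∧ (p.2.1, p.1) ∈ R} with hE6def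
  have mE1 : MeasurableSet E1 := by
    rw [hE1def, setOf_and]; exact (mpair _ _ mx ms).inter (mpair _ _ ms mt)
  have mE2 : MeasurableSet E2 := by
    rw [hE2def, setOf_and]; exact (mpair _ _ mx mt).inter (mpair _ _ mt ms)
  have mE3 : MeasurableSet E3 := by
    rw [hE3def, setOf_and]; exact (mpair _ _ ms mx).inter (mpair _ _ mx mt)
  have mE4 : MeasurableSet E4 := by
    rw [hE4def, setOf_and]; exact (mpair _ _ ms mt).inter (mpair _ _ mt mx)
  have mE5 : MeasurableSet E5 := by
    rw [hE5def, setOf_and]; exact (mpair _ _ mt mx).inter (mpair _ _ mx ms)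
  have mE6 : MeasurableSet E6 := by
    rw [hE6def, setOf_and]; exact (mpair _ _ mt ms).inter (mpair _ _ ms mx)
  -- values of the six patterns
  have hPE1 : P3 E1 = c * c * a := by
    rw [hP3def, Measure.prod_apply mE1]
    have hpt : ∫⁻ x, (κ.prod κ) (Prod.mk x ⁻¹' E1) ∂κ = ∫⁻ x, c * κ (sec' R x) ∂κ :=
      lintegral_congr fun x => hinner1 x
    rw [hpt]
    exact hIsec'
  have hPE2 : P3 E2 = c * c * a := by
    rw [hP3def, Measure.prod_apply mE2]
    have hx2 : ∀ x : ℝ, (κ.prod κ) (Prod.mk x ⁻¹' E2) = c * κ (sec' R x) := by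
      intro x
      have hmW : MeasurableSet (Prod.mk x ⁻¹' E2) := measurable_prodMk_left mE2
      conv_lhs => rw [← Measure.prod_swap]
      rw [Measure.map_apply measurable_swap hmW]
      exact hinner1 x
    have hpt : ∫⁻ x, (κ.prod κ) (Prod.mk x ⁻¹' E2) ∂κ = ∫⁻ x, c * κ (sec' R x) ∂κ :=
      lintegral_congr fun x => hx2 x
    rw [hpt]
    exact hIsec'
  have hPE3 : P3 E3 = c * c * a := by
    rw [hP3def, Measure.prod_apply mE3]
    have hx3 : ∀ x : ℝ, (κ.prod κ) (Prod.mk x ⁻¹' E3) = κ (sec R x) * κ (sec' R x) := by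
      intro x
      have h1 : Prod.mk x ⁻¹' E3 = sec R x ×ˢ sec' R x := by
        ext q; simp [hE3def, sec, sec', mem_prod]
      rw [h1, Measure.prod_prod]
    have hpt : ∫⁻ x, (κ.prod κ) (Prod.mk x ⁻¹' E3) ∂κ = ∫⁻ x, κ (sec R x) * κ (sec' R x) ∂κ :=
      lintegral_congr fun x => hx3 x
    rw [hpt]
    exact hIrect
  have hPE5 : P3 E5 = c * c * a := by
    rw [hP3def, Measure.prod_apply mE5]
    have hx5 : ∀ x : ℝ, (κ.prod κ) (Prod.mk x ⁻¹' E5) = κ (sec' R x) * κ (sec R x) := by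
      intro x
      have h1 : Prod.mk x ⁻¹' E5 = sec' R x ×ˢ sec R x := by
        ext q; simp [hE5def, sec, sec', mem_prod, and_comm]
      rw [h1, Measure.prod_prod]
    have hpt : ∫⁻ x, (κ.prod κ) (Prod.mk x ⁻¹' E5) ∂κ = ∫⁻ x, κ (sec' R x) * κ (sec R x) ∂κ :=
      lintegral_congr fun x => hx5 x
    rw [hpt]
    exact hIrect'
  have hPE4 : P3 E4 = c * c * a := by
    rw [hP3def, Measure.prod_apply mE4]
    have hx4 : ∀ x : ℝ, (κ.prod κ) (Prod.mk x ⁻¹' E4) = c * κ (sec R x) := by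
      intro x
      have hmW : MeasurableSet (Prod.mk x ⁻¹' E4) := measurable_prodMk_left mE4
      conv_lhs => rw [← Measure.prod_swap]
      rw [Measure.map_apply measurable_swap hmW]
      exact hinner2 x
    have hpt : ∫⁻ x, (κ.prod κ) (Prod.mk x ⁻¹' E4) ∂κ = ∫⁻ x, c * κ (sec R x) ∂κ :=
      lintegral_congr fun x => hx4 x
    rw [hpt]
    exact hIsec
  have hPE6 : P3 E6 = c * c * a := by
    rw [hP3def, Measure.prod_apply mE6]
    have hpt : ∫⁻ x, (κ.prod κ) (Prod.mk x ⁻¹' E6) ∂κ = ∫⁻ x, c * κ (sec R x) ∂κ :=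
      lintegral_congr fun x => hinner2 x
    rw [hpt]
    exact hIsec
  -- almost everywhere goodness
  have hκac : κ ≪ leb01 := Measure.absolutelyContinuous_of_le Measure.restrict_le_self
  have hPac : P3 ≪ leb01.prod (leb01.prod leb01) := hκac.prod (hκac.prod hκac)
  have hmap12 : (leb01.prod (leb01.prod leb01)).map (fun p : ℝ × ℝ × ℝ => (p.1, p.2.1))
      = leb01.prod leb01 := by
    have h := Measure.map_prod_map (f := (id : ℝ → ℝ)) (g := (Prod.fst : ℝ × ℝ → ℝ))
      leb01 (leb01.prod leb01) measurable_id measurable_fst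
    rw [Measure.map_id, (show (leb01.prod leb01).map Prod.fst = leb01 from Measure.fst_prod)] at h
    exact h.symm
  have hmap13 : (leb01.prod (leb01.prod leb01)).map (fun p : ℝ × ℝ × ℝ => (p.1, p.2.2))
      = leb01.prod leb01 := by
    have h := Measure.map_prod_map (f := (id : ℝ → ℝ)) (g := (Prod.snd : ℝ × ℝ → ℝ))
      leb01 (leb01.prod leb01) measurable_id measurable_snd
    rw [Measure.map_id, (show (leb01.prod leb01).map Prod.snd = leb01 from Measure.snd_prod)] at h
    exact h.symm
  have hmap23 : (leb01.prod (leb01.prod leb01)).map (Prod.snd : ℝ × ℝ × ℝ → ℝ × ℝ)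
      = leb01.prod leb01 := Measure.snd_prod
  have hpull12 : ∀ {Q : ℝ × ℝ → Prop}, (∀ᵐ q ∂(leb01.prod leb01), Q q) →
      ∀ᵐ p ∂(leb01.prod (leb01.prod leb01)), Q (p.1, p.2.1) := by
    intro Q hQ
    rw [← hmap12] at hQ
    exact ae_of_ae_map (measurable_fst.prodMk (measurable_fst.comp measurable_snd)).aemeasurable hQ
  have hpull13 : ∀ {Q : ℝ × ℝ → Prop}, (∀ᵐ q ∂(leb01.prod leb01), Q q) →
      ∀ᵐ p ∂(leb01.prod (leb01.prod leb01)), Q (p.1, p.2.2) := by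
    intro Q hQ
    rw [← hmap13] at hQ
    exact ae_of_ae_map (measurable_fst.prodMk (measurable_snd.comp measurable_snd)).aemeasurable hQ
  have hpull23 : ∀ {Q : ℝ × ℝ → Prop}, (∀ᵐ q ∂(leb01.prod leb01), Q q) →
      ∀ᵐ p ∂(leb01.prod (leb01.prod leb01)), Q (p.2.1, p.2.2) := by
    intro Q hQ
    rw [← hmap23] at hQ
    have := ae_of_ae_map (measurable_snd (α := ℝ) (β := ℝ × ℝ)).aemeasurable hQ
    filter_upwards [this] with p hp
    exact hp
  have htotal2 : ∀ᵐ q ∂(leb01.prod leb01),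
      q.1 ≠ q.2 ∧ (q.1 ≠ q.2 → Xor' ((q.1, q.2) ∈ R) ((q.2, q.1) ∈ R)) :=
    (ne_ae hR).and hR.total
  have hGoodμ : ∀ᵐ p ∂(leb01.prod (leb01.prod leb01)),
      (p.1 ≠ p.2.1 ∧ Xor' ((p.1, p.2.1) ∈ R) ((p.2.1, p.1) ∈ R)) ∧
      (p.1 ≠ p.2.2 ∧ Xor' ((p.1, p.2.2) ∈ R) ((p.2.2, p.1) ∈ R)) ∧
      (p.2.1 ≠ p.2.2 ∧ Xor' ((p.2.1, p.2.2) ∈ R) ((p.2.2, p.2.1) ∈ R)) ∧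
      ((p.1, p.2.1) ∈ R → (p.2.1, p.2.2) ∈ R → (p.1, p.2.2) ∈ R) ∧
      ((p.1, p.2.2) ∈ R → (p.2.2, p.2.1) ∈ R → (p.1, p.2.1) ∈ R) ∧
      ((p.2.1, p.1) ∈ R → (p.1, p.2.2) ∈ R → (p.2.1, p.2.2) ∈ R) ∧
      ((p.2.1, p.2.2) ∈ R → (p.2.2, p.1) ∈ R → (p.2.1, p.1) ∈ R) ∧
      ((p.2.2, p.1) ∈ R → (p.1, p.2.1) ∈ R → (p.2.2, p.2.1) ∈ R) ∧
      ((p.2.2, p.2.1) ∈ R → (p.2.1, p.1) ∈ R → (p.2.2, p.1) ∈ R) := by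
    filter_upwards [hpull12 htotal2, hpull13 htotal2, hpull23 htotal2, trans_all hR]
      with p h12 h13 h23 htr
    exact ⟨⟨h12.1, h12.2 h12.1⟩, ⟨h13.1, h13.2 h13.1⟩, ⟨h23.1, h23.2 h23.1⟩,
      htr.1, htr.2.1, htr.2.2.1, htr.2.2.2.1, htr.2.2.2.2.1, htr.2.2.2.2.2⟩
  have hGoodP := hGoodμ.filter_mono hPac.ae_le
  have hN12 : MeasureTheory.AEDisjoint P3 E1 E2 := by
    show P3 (E1 ∩ E2) = 0
    refine measure_mono_null ?_ (ae_iff.1 hGoodP)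
    intro p hp hg
    obtain ⟨⟨n12, o12⟩, ⟨n13, o13⟩, ⟨n23, o23⟩, t1, t2, t3, t4, t5, t6⟩ := hg
    exact (pattern_excl (r := fun u v : ℝ => (u, v) ∈ R) (x := p.1) (s := p.2.1) (t := p.2.2) o12 o13 o23 t1 t2 t3 t4 t5 t6).1 ⟨hp.1, hp.2⟩
  have hN13 : MeasureTheory.AEDisjoint P3 E1 E3 := by
    show P3 (E1 ∩ E3) = 0
    refine measure_mono_null ?_ (ae_iff.1 hGoodP)
    intro p hp hg
    obtain ⟨⟨n12, o12⟩, ⟨n13, o13⟩, ⟨n23, o23⟩, t1, t2, t3, t4, t5, t6⟩ := hg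
    exact (pattern_excl (r := fun u v : ℝ => (u, v) ∈ R) (x := p.1) (s := p.2.1) (t := p.2.2) o12 o13 o23 t1 t2 t3 t4 t5 t6).2.1 ⟨hp.1, hp.2⟩
  have hN14 : MeasureTheory.AEDisjoint P3 E1 E4 := by
    show P3 (E1 ∩ E4) = 0
    refine measure_mono_null ?_ (ae_iff.1 hGoodP)
    intro p hp hg
    obtain ⟨⟨n12, o12⟩, ⟨n13, o13⟩, ⟨n23, o23⟩, t1, t2, t3, t4, t5, t6⟩ := hg
    exact (pattern_excl (r := fun u v : ℝ => (u, v) ∈ R) (x := p.1) (s := p.2.1) (t := p.2.2) o12 o13 o23 t1 t2 t3 t4 t5 t6).2.2.1 ⟨hp.1, hp.2⟩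
  have hN15 : MeasureTheory.AEDisjoint P3 E1 E5 := by
    show P3 (E1 ∩ E5) = 0
    refine measure_mono_null ?_ (ae_iff.1 hGoodP)
    intro p hp hg
    obtain ⟨⟨n12, o12⟩, ⟨n13, o13⟩, ⟨n23, o23⟩, t1, t2, t3, t4, t5, t6⟩ := hg
    exact (pattern_excl (r := fun u v : ℝ => (u, v) ∈ R) (x := p.1) (s := p.2.1) (t := p.2.2) o12 o13 o23 t1 t2 t3 t4 t5 t6).2.2.2.1 ⟨hp.1, hp.2⟩
  have hN16 : MeasureTheory.AEDisjoint P3 E1 E6 := by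
    show P3 (E1 ∩ E6) = 0
    refine measure_mono_null ?_ (ae_iff.1 hGoodP)
    intro p hp hg
    obtain ⟨⟨n12, o12⟩, ⟨n13, o13⟩, ⟨n23, o23⟩, t1, t2, t3, t4, t5, t6⟩ := hg
    exact (pattern_excl (r := fun u v : ℝ => (u, v) ∈ R) (x := p.1) (s := p.2.1) (t := p.2.2) o12 o13 o23 t1 t2 t3 t4 t5 t6).2.2.2.2.1 ⟨hp.1, hp.2⟩
  have hN23 : MeasureTheory.AEDisjoint P3 E2 E3 := by
    show P3 (E2 ∩ E3) = 0
    refine measure_mono_null ?_ (ae_iff.1 hGoodP)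
    intro p hp hg
    obtain ⟨⟨n12, o12⟩, ⟨n13, o13⟩, ⟨n23, o23⟩, t1, t2, t3, t4, t5, t6⟩ := hg
    exact (pattern_excl (r := fun u v : ℝ => (u, v) ∈ R) (x := p.1) (s := p.2.1) (t := p.2.2) o12 o13 o23 t1 t2 t3 t4 t5 t6).2.2.2.2.2.1 ⟨hp.1, hp.2⟩
  have hN24 : MeasureTheory.AEDisjoint P3 E2 E4 := by
    show P3 (E2 ∩ E4) = 0
    refine measure_mono_null ?_ (ae_iff.1 hGoodP)
    intro p hp hg
    obtain ⟨⟨n12, o12⟩, ⟨n13, o13⟩, ⟨n23, o23⟩, t1, t2, t3, t4, t5, t6⟩ := hg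
    exact (pattern_excl (r := fun u v : ℝ => (u, v) ∈ R) (x := p.1) (s := p.2.1) (t := p.2.2) o12 o13 o23 t1 t2 t3 t4 t5 t6).2.2.2.2.2.2.1 ⟨hp.1, hp.2⟩
  have hN25 : MeasureTheory.AEDisjoint P3 E2 E5 := by
    show P3 (E2 ∩ E5) = 0
    refine measure_mono_null ?_ (ae_iff.1 hGoodP)
    intro p hp hg
    obtain ⟨⟨n12, o12⟩, ⟨n13, o13⟩, ⟨n23, o23⟩, t1, t2, t3, t4, t5, t6⟩ := hg
    exact (pattern_excl (r := fun u v : ℝ => (u, v) ∈ R) (x := p.1) (s := p.2.1) (t := p.2.2) o12 o13 o23 t1 t2 t3 t4 t5 t6).2.2.2.2.2.2.2.1 ⟨hp.1, hp.2⟩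
  have hN26 : MeasureTheory.AEDisjoint P3 E2 E6 := by
    show P3 (E2 ∩ E6) = 0
    refine measure_mono_null ?_ (ae_iff.1 hGoodP)
    intro p hp hg
    obtain ⟨⟨n12, o12⟩, ⟨n13, o13⟩, ⟨n23, o23⟩, t1, t2, t3, t4, t5, t6⟩ := hg
    exact (pattern_excl (r := fun u v : ℝ => (u, v) ∈ R) (x := p.1) (s := p.2.1) (t := p.2.2) o12 o13 o23 t1 t2 t3 t4 t5 t6).2.2.2.2.2.2.2.2.1 ⟨hp.1, hp.2⟩
  have hN34 : MeasureTheory.AEDisjoint P3 E3 E4 := by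
    show P3 (E3 ∩ E4) = 0
    refine measure_mono_null ?_ (ae_iff.1 hGoodP)
    intro p hp hg
    obtain ⟨⟨n12, o12⟩, ⟨n13, o13⟩, ⟨n23, o23⟩, t1, t2, t3, t4, t5, t6⟩ := hg
    exact (pattern_excl (r := fun u v : ℝ => (u, v) ∈ R) (x := p.1) (s := p.2.1) (t := p.2.2) o12 o13 o23 t1 t2 t3 t4 t5 t6).2.2.2.2.2.2.2.2.2.1 ⟨hp.1, hp.2⟩
  have hN35 : MeasureTheory.AEDisjoint P3 E3 E5 := by
    show P3 (E3 ∩ E5) = 0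
    refine measure_mono_null ?_ (ae_iff.1 hGoodP)
    intro p hp hg
    obtain ⟨⟨n12, o12⟩, ⟨n13, o13⟩, ⟨n23, o23⟩, t1, t2, t3, t4, t5, t6⟩ := hg
    exact (pattern_excl (r := fun u v : ℝ => (u, v) ∈ R) (x := p.1) (s := p.2.1) (t := p.2.2) o12 o13 o23 t1 t2 t3 t4 t5 t6).2.2.2.2.2.2.2.2.2.2.1 ⟨hp.1, hp.2⟩
  have hN36 : MeasureTheory.AEDisjoint P3 E3 E6 := by
    show P3 (E3 ∩ E6) = 0
    refine measure_mono_null ?_ (ae_iff.1 hGoodP)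
    intro p hp hg
    obtain ⟨⟨n12, o12⟩, ⟨n13, o13⟩, ⟨n23, o23⟩, t1, t2, t3, t4, t5, t6⟩ := hg
    exact (pattern_excl (r := fun u v : ℝ => (u, v) ∈ R) (x := p.1) (s := p.2.1) (t := p.2.2) o12 o13 o23 t1 t2 t3 t4 t5 t6).2.2.2.2.2.2.2.2.2.2.2.1 ⟨hp.1, hp.2⟩
  have hN45 : MeasureTheory.AEDisjoint P3 E4 E5 := by
    show P3 (E4 ∩ E5) = 0
    refine measure_mono_null ?_ (ae_iff.1 hGoodP)
    intro p hp hg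
    obtain ⟨⟨n12, o12⟩, ⟨n13, o13⟩, ⟨n23, o23⟩, t1, t2, t3, t4, t5, t6⟩ := hg
    exact (pattern_excl (r := fun u v : ℝ => (u, v) ∈ R) (x := p.1) (s := p.2.1) (t := p.2.2) o12 o13 o23 t1 t2 t3 t4 t5 t6).2.2.2.2.2.2.2.2.2.2.2.2.1 ⟨hp.1, hp.2⟩
  have hN46 : MeasureTheory.AEDisjoint P3 E4 E6 := by
    show P3 (E4 ∩ E6) = 0
    refine measure_mono_null ?_ (ae_iff.1 hGoodP)
    intro p hp hg
    obtain ⟨⟨n12, o12⟩, ⟨n13, o13⟩, ⟨n23, o23⟩, t1, t2, t3, t4, t5, t6⟩ := hg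
    exact (pattern_excl (r := fun u v : ℝ => (u, v) ∈ R) (x := p.1) (s := p.2.1) (t := p.2.2) o12 o13 o23 t1 t2 t3 t4 t5 t6).2.2.2.2.2.2.2.2.2.2.2.2.2.1 ⟨hp.1, hp.2⟩
  have hN56 : MeasureTheory.AEDisjoint P3 E5 E6 := by
    show P3 (E5 ∩ E6) = 0
    refine measure_mono_null ?_ (ae_iff.1 hGoodP)
    intro p hp hg
    obtain ⟨⟨n12, o12⟩, ⟨n13, o13⟩, ⟨n23, o23⟩, t1, t2, t3, t4, t5, t6⟩ := hg
    exact (pattern_excl (r := fun u v : ℝ => (u, v) ∈ R) (x := p.1) (s := p.2.1) (t := p.2.2) o12 o13 o23 t1 t2 t3 t4 t5 t6).2.2.2.2.2.2.2.2.2.2.2.2.2.2 ⟨hp.1, hp.2⟩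
  have hU2 : P3 (E1 ∪ E2) = c * c * a + c * c * a := by
    rw [measure_union₀ mE2.nullMeasurableSet hN12, hPE1, hPE2]
  have hD3 : MeasureTheory.AEDisjoint P3 (E1 ∪ E2) E3 := by
    show P3 ((E1 ∪ E2) ∩ E3) = 0
    rw [union_inter_distrib_right]
    exact measure_union_null (hN13 : P3 (E1 ∩ E3) = 0) (hN23 : P3 (E2 ∩ E3) = 0)
  have hU3 : P3 (E1 ∪ E2 ∪ E3) = c * c * a + c * c * a + c * c * a := by
    rw [measure_union₀ mE3.nullMeasurableSet hD3, hU2, hPE3]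
  have hD4 : MeasureTheory.AEDisjoint P3 (E1 ∪ E2 ∪ E3) E4 := by
    show P3 ((E1 ∪ E2 ∪ E3) ∩ E4) = 0
    rw [union_inter_distrib_right, union_inter_distrib_right]
    exact measure_union_null (measure_union_null (hN14 : P3 (E1 ∩ E4) = 0) (hN24 : P3 (E2 ∩ E4) = 0)) (hN34 : P3 (E3 ∩ E4) = 0)
  have hU4 : P3 (E1 ∪ E2 ∪ E3 ∪ E4) = c * c * a + c * c * a + c * c * a + c * c * a := by
    rw [measure_union₀ mE4.nullMeasurableSet hD4, hU3, hPE4]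
  have hD5 : MeasureTheory.AEDisjoint P3 (E1 ∪ E2 ∪ E3 ∪ E4) E5 := by
    show P3 ((E1 ∪ E2 ∪ E3 ∪ E4) ∩ E5) = 0
    rw [union_inter_distrib_right, union_inter_distrib_right, union_inter_distrib_right]
    exact measure_union_null (measure_union_null (measure_union_null (hN15 : P3 (E1 ∩ E5) = 0) (hN25 : P3 (E2 ∩ E5) = 0)) (hN35 : P3 (E3 ∩ E5) = 0)) (hN45 : P3 (E4 ∩ E5) = 0)
  have hU5 : P3 (E1 ∪ E2 ∪ E3 ∪ E4 ∪ E5)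
      = c * c * a + c * c * a + c * c * a + c * c * a + c * c * a := by
    rw [measure_union₀ mE5.nullMeasurableSet hD5, hU4, hPE5]
  have hD6 : MeasureTheory.AEDisjoint P3 (E1 ∪ E2 ∪ E3 ∪ E4 ∪ E5) E6 := by
    show P3 ((E1 ∪ E2 ∪ E3 ∪ E4 ∪ E5) ∩ E6) = 0
    rw [union_inter_distrib_right, union_inter_distrib_right, union_inter_distrib_right,
      union_inter_distrib_right]
    exact measure_union_null (measure_union_null (measure_union_null
      (measure_union_null (hN16 : P3 (E1 ∩ E6) = 0) (hN26 : P3 (E2 ∩ E6) = 0))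
      (hN36 : P3 (E3 ∩ E6) = 0)) (hN46 : P3 (E4 ∩ E6) = 0)) (hN56 : P3 (E5 ∩ E6) = 0)
  have hU6 : P3 (E1 ∪ E2 ∪ E3 ∪ E4 ∪ E5 ∪ E6)
      = c * c * a + c * c * a + c * c * a + c * c * a + c * c * a + c * c * a := by
    rw [measure_union₀ mE6.nullMeasurableSet hD6, hU5, hPE6]
  have hP3univ : P3 univ = a * (a * a) := by
    rw [hP3def, ← univ_prod_univ, Measure.prod_prod, ← univ_prod_univ, Measure.prod_prod, hκuniv]
  have hle6 : 6 * (c * c * a) ≤ a * (a * a) := by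
    have h1 : P3 (E1 ∪ E2 ∪ E3 ∪ E4 ∪ E5 ∪ E6) ≤ P3 univ := measure_mono (subset_univ _)
    rw [hU6, hP3univ] at h1
    calc 6 * (c * c * a)
        = c * c * a + c * c * a + c * c * a + c * c * a + c * c * a + c * c * a := by ring
      _ ≤ a * (a * a) := h1
  have ha_eq : a = c + c := by rw [← hcd, ← hceqd]
  rw [ha_eq] at hle6
  have hL : (6 : ℝ≥0∞) * (c * c * (c + c)) = 12 * (c * c * c) := by ring
  have hRR : ((c + c) * ((c + c) * (c + c)) : ℝ≥0∞) = 8 * (c * c * c) := by ring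
  rw [hL, hRR] at hle6
  have hc3 : c * c * c ≠ 0 := mul_ne_zero (mul_ne_zero hc0 hc0) hc0
  have hc3T : c * c * c ≠ ∞ := ENNReal.mul_ne_top (ENNReal.mul_ne_top hcT hcT) hcT
  rw [mul_comm (12 : ℝ≥0∞) _, mul_comm (8 : ℝ≥0∞) _] at hle6
  have h12 : (12 : ℝ≥0∞) ≤ 8 := (ENNReal.mul_le_mul_iff_right hc3 hc3T).1 hle6
  norm_num at h12

lemma cdf_le (ν : Measure ℝ)
    (hatom : ∀ y : ℝ, ν {y} = 0)
    (hnull : ν {y : ℝ | ν (Iic y) = ENNReal.ofReal y}ᶜ = 0) (c : ℝ) :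
    ν (Iio c) ≤ ENNReal.ofReal c := by
  set G := {y : ℝ | ν (Iic y) = ENNReal.ofReal y} with hGdef
  set K := Iio c ∩ G with hKdef
  have hνK : ν (Iio c) ≤ ν K := by
    have h1 : ν (Iio c) ≤ ν (Iio c ∩ G) + ν (Iio c \ G) := measure_le_inter_add_diff ν _ _
    have h2 : ν (Iio c \ G) = 0 := measure_mono_null (diff_subset_compl _ _) hnull
    simpa [h2] using h1
  rcases K.eq_empty_or_nonempty with hK | hK
  · rw [hK, measure_empty, nonpos_iff_eq_zero] at hνK
    rw [hνK]; exact zero_le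
  have hKbd : BddAbove K := ⟨c, fun y hy => le_of_lt hy.1⟩
  set s := sSup K with hs
  have hKs : K ⊆ Iic s := fun y hy => le_csSup hKbd hy
  have hIics : ν (Iic s) ≤ ν (Iio s) := by
    have h1 : ν (Iic s) ≤ ν (Iio s) + ν {s} := by
      refine le_trans (measure_mono ?_) (measure_union_le _ _)
      intro z hz
      rcases lt_or_eq_of_le (mem_Iic.1 hz) with h | h
      · exact Or.inl h
      · exact Or.inr (by simp [h])
    simpa [hatom s] using h1
  have hIos : ν (Iio s) ≤ ENNReal.ofReal c := by
    have hUn : Iio s = ⋃ n : ℕ, Iic (s - 1 / (n + 1)) := by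
      ext z
      simp only [mem_Iio, mem_iUnion, mem_Iic]
      constructor
      · intro hz
        obtain ⟨n, hn⟩ := exists_nat_one_div_lt (sub_pos.2 hz)
        exact ⟨n, by linarith⟩
      · intro ⟨n, hn⟩
        have : (0:ℝ) < 1 / (n + 1) := by positivity
        linarith
    have hmono : Monotone fun n : ℕ => Iic (s - 1 / (n + 1 : ℝ)) := by
      intro n m hnm
      apply Iic_subset_Iic.2
      have : (1 : ℝ) / (m + 1) ≤ 1 / (n + 1) := by
        apply one_div_le_one_div_of_le (by positivity)
        exact_mod_cast by omega
      linarith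
    rw [hUn, hmono.directed_le.measure_iUnion]
    refine iSup_le fun n => ?_
    have hlt : s - 1 / (n + 1 : ℝ) < s := by
      have : (0:ℝ) < 1 / (n + 1) := by positivity
      linarith
    obtain ⟨y, hyK, hy⟩ := exists_lt_of_lt_csSup hK hlt
    calc ν (Iic (s - 1 / (n + 1 : ℝ))) ≤ ν (Iic y) := measure_mono (Iic_subset_Iic.2 hy.le)
      _ = ENNReal.ofReal y := hyK.2
      _ ≤ ENNReal.ofReal c := ENNReal.ofReal_le_ofReal (le_of_lt hyK.1)
  exact le_trans hνK (le_trans (measure_mono (hKs.trans (fun z hz => hz))) (le_trans hIics hIos))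

theorem atomless' (hR : AEStrictTotalOrder R) (y : ℝ) :
    (leb01.map (rankFun R)) {y} = 0 := atomless hR y

theorem map_rank_eq (hR : AEStrictTotalOrder R) : leb01.map (rankFun R) = leb01 := by
  have hmR := hR.measurable
  set ν := leb01.map (rankFun R) with hν
  haveI : IsProbabilityMeasure ν := Measure.isProbabilityMeasure_map (rank_meas hmR).aemeasurable
  have hatom : ∀ y, ν {y} = 0 := atomless hR
  have hIioIic : ∀ y : ℝ, ν (Iic y) = ν (Iio y) := by
    intro y
    refine le_antisymm ?_ (measure_mono Iio_subset_Iic_self)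
    have h1 : ν (Iic y) ≤ ν (Iio y) + ν {y} := by
      refine le_trans (measure_mono ?_) (measure_union_le _ _)
      intro z hz
      rcases lt_or_eq_of_le (mem_Iic.1 hz) with h | h
      · exact Or.inl h
      · exact Or.inr (by simp [h])
    simpa [hatom y] using h1
  have hae : ∀ᵐ y ∂ν, ν (Iic y) = ENNReal.ofReal y := by
    filter_upwards [key_y hR] with y hy
    refine le_antisymm ?_ hy.2
    rw [hIioIic y]
    exact hy.1
  have hnull : ν {y : ℝ | ν (Iic y) = ENNReal.ofReal y}ᶜ = 0 := by
    have := ae_iff.1 hae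
    simpa [compl_setOf] using this
  have hle : ∀ c, ν (Iio c) ≤ ENNReal.ofReal c := cdf_le ν hatom hnull
  -- the reflected measure
  set ρ : ℝ → ℝ := fun y => 1 - y with hρdef
  have hρ : Measurable ρ := measurable_const.sub measurable_id
  set ν' := ν.map ρ with hν'
  have hν'app : ∀ s : Set ℝ, MeasurableSet s → ν' s = ν (ρ ⁻¹' s) :=
    fun s hs => Measure.map_apply hρ hs
  have hatom' : ∀ y, ν' {y} = 0 := by
    intro y
    rw [hν'app _ (measurableSet_singleton y)]
    have : ρ ⁻¹' {y} = {1 - y} := by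
      ext z
      simp only [mem_preimage, mem_singleton_iff, hρdef]
      constructor <;> intro h <;> linarith
    rw [this]
    exact hatom _
  have hrank01 : ∀ t, rankFun R t ∈ Icc (0:ℝ) 1 :=
    fun t => ⟨rank_nonneg hmR t, rank_le_one hmR t⟩
  have h01 : ∀ᵐ z ∂ν, z ∈ Icc (0:ℝ) 1 := by
    rw [hν]
    exact (ae_map_iff (rank_meas hmR).aemeasurable measurableSet_Icc).2
      (Filter.Eventually.of_forall hrank01)
  have hIciIoi : ∀ y : ℝ, ν (Ici y) = ν (Ioi y) := by
    intro y
    refine le_antisymm ?_ (measure_mono Ioi_subset_Ici_self)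
    have h1 : ν (Ici y) ≤ ν (Ioi y) + ν {y} := by
      refine le_trans (measure_mono ?_) (measure_union_le _ _)
      intro z hz
      rcases lt_or_eq_of_le (mem_Ici.1 hz) with h | h
      · exact Or.inl h
      · exact Or.inr (by simp [h.symm])
    simpa [hatom y] using h1
  have hnull' : ν' {y : ℝ | ν' (Iic y) = ENNReal.ofReal y}ᶜ = 0 := by
    have hmono' : Measurable fun y : ℝ => ν' (Iic y) :=
      Monotone.measurable (fun _ _ h => measure_mono (Iic_subset_Iic.2 h))
    have hmsetc : MeasurableSet {y : ℝ | ν' (Iic y) = ENNReal.ofReal y} := by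
      have : {y : ℝ | ν' (Iic y) = ENNReal.ofReal y} =
          {y : ℝ | ν' (Iic y) ≤ ENNReal.ofReal y} ∩ {y : ℝ | ENNReal.ofReal y ≤ ν' (Iic y)} := by
        ext z; simp only [mem_setOf_eq, mem_inter_iff, le_antisymm_iff]
      rw [this]
      exact (measurableSet_le hmono' ENNReal.measurable_ofReal).inter
        (measurableSet_le (α := ℝ≥0∞) ENNReal.measurable_ofReal hmono')
    have hae' : ∀ᵐ y ∂ν', ν' (Iic y) = ENNReal.ofReal y := by
      rw [hν']
      refine (ae_map_iff hρ.aemeasurable hmsetc).2 ?_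
      filter_upwards [hae, h01] with z hz hz01
      show ν' (Iic (ρ z)) = ENNReal.ofReal (ρ z)
      rw [hν'app _ measurableSet_Iic]
      have hpre : ρ ⁻¹' Iic (ρ z) = Ici z := by
        ext w
        simp only [mem_preimage, mem_Iic, mem_Ici, hρdef]
        constructor <;> intro h <;> linarith
      rw [hpre]
      have hcompl : ν (Ici z) = 1 - ν (Iio z) := by
        rw [← compl_Iio, measure_compl measurableSet_Iio (measure_ne_top ν _), measure_univ]
      rw [hcompl, ← hIioIic z, hz, hρdef]
      rw [ENNReal.ofReal_sub 1 hz01.1, ENNReal.ofReal_one]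
    have := ae_iff.1 hae'
    simpa [compl_setOf] using this
  have hle' : ∀ c, ν' (Iio c) ≤ ENNReal.ofReal c := cdf_le ν' hatom' hnull'
  have hge : ∀ c : ℝ, c ∈ Icc (0:ℝ) 1 → ENNReal.ofReal c ≤ ν (Iic c) := by
    intro c hc
    have h1 := hle' (1 - c)
    have h2 : ν' (Iio (1 - c)) = ν (Ioi c) := by
      rw [hν'app _ measurableSet_Iio]
      congr 1
      ext w
      simp only [mem_preimage, mem_Iio, mem_Ioi, hρdef]
      constructor <;> intro h <;> linarith
    have h3 : ν (Ioi c) = 1 - ν (Iic c) := by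
      rw [← compl_Iic, measure_compl measurableSet_Iic (measure_ne_top ν _), measure_univ]
    rw [h2, h3] at h1
    have h4 : ENNReal.ofReal (1 - c) = 1 - ENNReal.ofReal c := by
      rw [ENNReal.ofReal_sub 1 hc.1, ENNReal.ofReal_one]
    rw [h4] at h1
    have h5 : ENNReal.ofReal c ≤ 1 := ENNReal.ofReal_le_one.2 hc.2
    exact (ENNReal.sub_le_sub_iff_left h5 ENNReal.one_ne_top).1 h1
  refine Measure.ext_of_Iic ν leb01 ?_
  intro a
  have hleb : leb01 (Iic a) = volume (Iic a ∩ Icc 0 1) := by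
    rw [leb01, Measure.restrict_apply measurableSet_Iic]
  rcases lt_or_ge a 0 with ha | ha
  · have h1 : ν (Iic a) ≤ ν (Iio 0) := measure_mono (fun z hz => lt_of_le_of_lt (mem_Iic.1 hz) ha)
    have h2 : ν (Iio 0) ≤ ENNReal.ofReal 0 := hle 0
    have h3 : ν (Iic a) = 0 := le_antisymm (by simpa using h1.trans h2) zero_le
    rw [h3, hleb]
    have : Iic a ∩ Icc (0:ℝ) 1 = ∅ := by
      ext z
      simp only [mem_inter_iff, mem_Iic, mem_Icc, mem_empty_iff_false, iff_false]
      intro ⟨h1', h2'⟩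
      linarith [h2'.1]
    rw [this, measure_empty]
  rcases le_or_gt a 1 with ha1 | ha1
  · have heq : ν (Iic a) = ENNReal.ofReal a := by
      refine le_antisymm ?_ (hge a ⟨ha, ha1⟩)
      rw [hIioIic a]
      exact hle a
    rw [heq, hleb]
    have : Iic a ∩ Icc (0:ℝ) 1 = Icc 0 a := by
      ext z
      simp only [mem_inter_iff, mem_Iic, mem_Icc]
      constructor
      · rintro ⟨h1', h2', _⟩; exact ⟨h2', h1'⟩
      · rintro ⟨h1', h2'⟩; exact ⟨h2', h1', le_trans h2' ha1⟩
    rw [this, Real.volume_Icc, sub_zero]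
  · have hpre : rankFun R ⁻¹' Iic a = univ := by
      ext t
      simp only [mem_preimage, mem_Iic, mem_univ, iff_true]
      exact le_trans (rank_le_one hmR t) ha1.le
    have h1 : ν (Iic a) = 1 := by
      rw [hν, Measure.map_apply (rank_meas hmR) measurableSet_Iic, hpre]
      exact measure_univ
    rw [h1, hleb]
    have : Iic a ∩ Icc (0:ℝ) 1 = Icc 0 1 := by
      ext z
      simp only [mem_inter_iff, mem_Iic, mem_Icc]
      constructor
      · rintro ⟨_, h2'⟩; exact h2'
      · rintro ⟨h1', h2'⟩; exact ⟨le_trans h2' ha1.le, h1', h2'⟩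
    rw [this, Real.volume_Icc]
    simp

end PermutonAux

open PermutonAux in
/-- If `R` is an a.e. strict total order on `[0,1]` with rank function `φ`, the pushforward of
Lebesgue measure on `[0,1]` under `t ↦ (t, φ(t))` is a permuton: a Borel probability measure on
`[0,1]²` whose two marginals are both Lebesgue measure on `[0,1]`. -/
theorem map_rankFun_graph_isPermuton (R : Set (ℝ × ℝ)) (hR : AEStrictTotalOrder R) :
    IsProbabilityMeasure (leb01.map (fun t => (t, rankFun R t))) ∧
    (leb01.map (fun t => (t, rankFun R t))) ((Icc (0:ℝ) 1 ×ˢ Icc (0:ℝ) 1)ᶜ) = 0 ∧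
    (leb01.map (fun t => (t, rankFun R t))).map Prod.fst = leb01 ∧
    (leb01.map (fun t => (t, rankFun R t))).map Prod.snd = leb01 := by
  have hmR := hR.measurable
  have hg : Measurable (fun t => (t, rankFun R t)) :=
    measurable_id.prodMk (rank_meas hmR)
  refine ⟨?_, ?_, ?_, ?_⟩
  · exact Measure.isProbabilityMeasure_map hg.aemeasurable
  · rw [Measure.map_apply hg (by measurability)]
    refine measure_mono_null (t := (Icc (0:ℝ) 1)ᶜ) (fun t ht => ?_) ?_
    · intro htI
      exact ht ⟨htI, rank_nonneg hmR t, rank_le_one hmR t⟩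
    · unfold leb01
      rw [Measure.restrict_apply (measurableSet_Icc.compl)]
      simp
  · rw [Measure.map_map measurable_fst hg]
    have : (Prod.fst ∘ fun t => (t, rankFun R t)) = id := rfl
    rw [this, Measure.map_id]
  · rw [Measure.map_map measurable_snd hg]
    have : (Prod.snd ∘ fun t => (t, rankFun R t)) = rankFun R := rfl
    rw [this]
    exact map_rank_eq hR
end

section
/- Let e : [0,1] → ℝ be continuous and let S : [0,1] → {−1,+1} be any function. Let 0 ≤ x < y ≤ 1, set m := min_{r ∈ [x,y]} e(r), and assume the minimum of e on [x,y] is attained at a unique point t ∈ [x,y] with x < t < y. Define τ := sup{r ∈ [x,y] : e(r) = m} and Z := (e(y) − m)·(−S(τ)). Then τ = t, e(y) > m, and Z < 0 if and only if S(t) = +1 (equivalently, Z > 0 if and only if S(t) = −1). Consequently, the relation declaring 'x precedes y when S(t) = +1' (the order defining the biased Brownian separable permuton) agrees with the relation declaring 'x precedes y when Z < 0' (the order defining the skew Brownian permuton with ρ = 1 and sign sequence −S) on every such pair (x,y). -/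
open Set

/-- Deterministic core of the identification of the biased Brownian separable permuton with the
skew Brownian permuton of parameter `ρ = 1`: for a continuous excursion `e`, a sign function
`S` with values in `{−1, +1}`, and `0 ≤ x < y ≤ 1` such that `min_{[x,y]} e` is attained at a
unique point `t` with `x < t < y`, letting `m := min_{[x,y]} e`,
`τ := sup {r ∈ [x,y] : e r = m}` and `Z := (e y − m) · (−S τ)`, one has `τ = t`, `e y > m`,
`Z < 0 ↔ S t = +1` and `Z > 0 ↔ S t = −1`. -/
theorem skewWalk_sign_agrees_with_separable_order
    (e : ℝ → ℝ) (he : ContinuousOn e (Icc 0 1))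
    (S : ℝ → ℝ) (hS : ∀ r, S r = 1 ∨ S r = -1)
    (x y : ℝ) (hx : 0 ≤ x) (hxy : x < y) (hy : y ≤ 1)
    (t : ℝ) (hxt : x < t) (hty : t < y)
    (hmin : ∀ r ∈ Icc x y, e t ≤ e r)
    (huniq : ∀ r ∈ Icc x y, e r = e t → r = t)
    (m τ Z : ℝ)
    (hm : m = sInf (e '' Icc x y))
    (hτ : τ = sSup {r ∈ Icc x y | e r = m})
    (hZ : Z = (e y - m) * (-(S τ))) :
    τ = t ∧ m < e y ∧ (Z < 0 ↔ S t = 1) ∧ (0 < Z ↔ S t = -1) := by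
  have htmem : t ∈ Icc x y := ⟨hxt.le, hty.le⟩
  have hymem : y ∈ Icc x y := ⟨hxy.le, le_refl y⟩
  have hbdd : BddBelow (e '' Icc x y) := ⟨e t, by rintro _ ⟨r, hr, rfl⟩; exact hmin r hr⟩
  have hmet : m = e t := by
    rw [hm]
    refine le_antisymm (csInf_le hbdd ⟨t, htmem, rfl⟩) ?_
    refine le_csInf ⟨e t, t, htmem, rfl⟩ ?_
    rintro _ ⟨r, hr, rfl⟩
    exact hmin r hr
  have hset : {r ∈ Icc x y | e r = m} = {t} := by
    ext r
    simp only [mem_setOf_eq, mem_singleton_iff]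
    constructor
    · rintro ⟨hr, her⟩
      exact huniq r hr (her.trans hmet)
    · rintro rfl
      exact ⟨htmem, hmet.symm⟩
  have hτt : τ = t := by rw [hτ, hset, csSup_singleton]
  have hmy : m < e y := by
    rcases lt_or_eq_of_le (hmet ▸ hmin y hymem) with h | h
    · exact h
    · exact absurd (huniq y hymem (hmet ▸ h.symm)) (ne_of_gt hty)
  refine ⟨hτt, hmy, ?_, ?_⟩ <;> rw [hZ, hτt] <;>
    rcases hS t with h | h <;> rw [h] <;> constructor <;> intro h2 <;> nlinarith
end

section
/- Let R ⊆ [0,1]×[0,1] be a Borel set which is an almost-everywhere strict total order, and let (U_i)_{i≥1} be a sequence of independent random variables, each uniformly distributed on [0,1], defined on some probability space. Then for every integer k ≥ 2, the random variable N_k := #{i ∈ {2,…,k} : (U_i, U_1) ∈ R} is uniformly distributed on {0, 1, …, k−1}, i.e. P(N_k = j) = 1/k for every j ∈ {0,…,k−1}. -/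
open MeasureTheory Set ProbabilityTheory
open scoped ENNReal Classical

instance inst_s5 : IsProbabilityMeasure leb01 := by
  constructor; simp [leb01, Real.volume_Icc]

instance inst_s5_2 : NullSingletonClass leb01 := by
  unfold leb01; infer_instance

lemma leb01_diag : (leb01.prod leb01) {p : ℝ × ℝ | p.1 = p.2} = 0 := by
  have hm : MeasurableSet {p : ℝ × ℝ | p.1 = p.2} :=
    measurableSet_eq_fun measurable_fst measurable_snd
  rw [Measure.prod_apply hm]
  have h0 : ∀ x : ℝ, leb01 (Prod.mk x ⁻¹' {p : ℝ × ℝ | p.1 = p.2}) = 0 := by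
    intro x
    have : Prod.mk x ⁻¹' {p : ℝ × ℝ | p.1 = p.2} = {x} := by
      ext y; simp [eq_comm]
    rw [this, measure_singleton]
  simp [h0]

/-- The combinatorial core: if `r` behaves like a strict total order on the (distinct) values
`f i`, then for each `j` below the cardinality there is exactly one index whose "rank" is `j`. -/
lemma comb_core {ι : Type*} [Fintype ι] [DecidableEq ι] (f : ι → ℝ) (r : ℝ → ℝ → Prop)
    (h1 : ∀ a b : ι, a ≠ b → (f a ≠ f b ∧ Xor' (r (f a) (f b)) (r (f b) (f a))))
    (h2 : ∀ a b c : ι, a ≠ b → b ≠ c → a ≠ c → r (f a) (f b) → r (f b) (f c) → r (f a) (f c))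
    {j : ℕ} (hj : j < Fintype.card ι) :
    ∃! i : ι, (Finset.univ.filter (fun m => m ≠ i ∧ r (f m) (f i))).card = j := by
  classical
  set c : ι → ℕ := fun i => (Finset.univ.filter (fun m => m ≠ i ∧ r (f m) (f i))).card with hc
  have key : ∀ a b : ι, a ≠ b → r (f a) (f b) → c a < c b := by
    intro a b hab hr
    have hsub : insert a (Finset.univ.filter (fun m => m ≠ a ∧ r (f m) (f a)))
        ⊆ Finset.univ.filter (fun m => m ≠ b ∧ r (f m) (f b)) := by
      intro m hm
      rcases Finset.mem_insert.mp hm with rfl | hm'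
      · exact Finset.mem_filter.mpr ⟨Finset.mem_univ _, hab, hr⟩
      · obtain ⟨-, hma, hrma⟩ := Finset.mem_filter.mp hm'
        have hmb : m ≠ b := by
          rintro rfl
          rcases (h1 a m hab).2 with ⟨_, hnb⟩ | ⟨_, hna⟩
          · exact hnb hrma
          · exact hna hr
        exact Finset.mem_filter.mpr ⟨Finset.mem_univ _, hmb, h2 m a b hma hab hmb hrma hr⟩
    have hnotmem : a ∉ Finset.univ.filter (fun m => m ≠ a ∧ r (f m) (f a)) := by simp
    calc c a < c a + 1 := Nat.lt_succ_self _
      _ = (insert a (Finset.univ.filter (fun m => m ≠ a ∧ r (f m) (f a)))).card :=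
          (Finset.card_insert_of_notMem hnotmem).symm
      _ ≤ c b := Finset.card_le_card hsub
  have hinj : Function.Injective c := by
    intro a b hab'
    by_contra hne
    rcases (h1 a b hne).2 with ⟨hr, _⟩ | ⟨hr, _⟩
    · exact absurd hab' (Nat.ne_of_lt (key a b hne hr))
    · exact absurd hab'.symm (Nat.ne_of_lt (key b a (Ne.symm hne) hr))
  have hlt : ∀ i, c i < Fintype.card ι := by
    intro i
    have h0 : Finset.univ.filter (fun m => m ≠ i ∧ r (f m) (f i)) ⊆ Finset.univ.erase i := by
      intro m hm
      obtain ⟨-, hmi, -⟩ := Finset.mem_filter.mp hm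
      exact Finset.mem_erase.mpr ⟨hmi, Finset.mem_univ _⟩
    calc c i ≤ (Finset.univ.erase i).card := Finset.card_le_card h0
      _ < Finset.univ.card := Finset.card_erase_lt_of_mem (Finset.mem_univ i)
      _ = Fintype.card ι := Finset.card_univ
  have himg : Finset.univ.image c = Finset.range (Fintype.card ι) := by
    apply Finset.eq_of_subset_of_card_le
    · intro n hn
      rcases Finset.mem_image.mp hn with ⟨i, -, rfl⟩
      exact Finset.mem_range.mpr (hlt i)
    · rw [Finset.card_range, Finset.card_image_of_injective _ hinj, Finset.card_univ]
  have hjmem : j ∈ Finset.univ.image c := himg ▸ Finset.mem_range.mpr hj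
  rcases Finset.mem_image.mp hjmem with ⟨i, -, hi⟩
  refine ⟨i, hi, fun y hy => hinj ?_⟩
  show c y = c i
  simp only [hc]
  rw [show ((Finset.filter (fun m => m ≠ i ∧ r (f m) (f i)) Finset.univ).card) = j from hi]
  exact hy

lemma ae_of_map {Ω β : Type*} [MeasurableSpace Ω] [MeasurableSpace β] {μ : Measure Ω}
    {f : Ω → β} (hf : Measurable f) {ν : Measure β} (hlaw : μ.map f = ν)
    {P : β → Prop} (hP : MeasurableSet {x | P x}) (h : ∀ᵐ x ∂ν, P x) :
    ∀ᵐ ω ∂μ, P (f ω) := by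
  rw [ae_iff] at h ⊢
  have h2 : MeasurableSet {x | ¬ P x} := by
    have : {x | ¬ P x} = {x | P x}ᶜ := rfl
    rw [this]; exact hP.compl
  have h3 : {ω | ¬ P (f ω)} = f ⁻¹' {x | ¬ P x} := rfl
  rw [h3, ← Measure.map_apply hf h2, hlaw]; exact h

lemma measurableSet_imp {α : Type*} [MeasurableSpace α] {p q : α → Prop}
    (hp : MeasurableSet {x | p x}) (hq : MeasurableSet {x | q x}) :
    MeasurableSet {x | p x → q x} := by
  have : {x | p x → q x} = {x | p x}ᶜ ∪ {x | q x} := by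
    ext x; simp [imp_iff_not_or]
  rw [this]; exact hp.compl.union hq

lemma measurableSet_xor {α : Type*} [MeasurableSpace α] {p q : α → Prop}
    (hp : MeasurableSet {x | p x}) (hq : MeasurableSet {x | q x}) :
    MeasurableSet {x | Xor' (p x) (q x)} := by
  have : {x | Xor' (p x) (q x)} =
      ({x | p x} ∩ {x | q x}ᶜ) ∪ ({x | q x} ∩ {x | p x}ᶜ) := by
    ext x; simp [Xor', xor_def]
  rw [this]
  exact (hp.inter hq.compl).union (hq.inter hp.compl)

lemma map_T_eq_pi {Ω : Type*} [MeasurableSpace Ω] (μ : Measure Ω) (U : ℕ → Ω → ℝ)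
    (hUmeas : ∀ i, Measurable (U i))
    (hUindep : iIndepFun U μ)
    (hUunif : ∀ i, μ.map (U i) = leb01) (k : ℕ) :
    μ.map (fun ω (i : Fin k) => U ((i : ℕ)+1) ω) = Measure.pi (fun _ => leb01) := by
  have hT : Measurable (fun ω (i : Fin k) => U ((i : ℕ)+1) ω) :=
    measurable_pi_lambda _ (fun i => hUmeas _)
  refine (Measure.pi_eq ?_).symm
  intro s hs
  set sets : ℕ → Set ℝ := fun n => if h : n - 1 < k ∧ 1 ≤ n then s ⟨n-1, h.1⟩ else Set.univ
    with hsets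
  have hsets_meas : ∀ n, MeasurableSet (sets n) := by
    intro n; rw [hsets]; dsimp only; split
    · exact hs _
    · exact MeasurableSet.univ
  have hsets_eq : ∀ i : Fin k, sets ((i:ℕ)+1) = s i := by
    intro i; rw [hsets]; dsimp only
    rw [dif_pos ⟨by simp, Nat.le_add_left 1 i⟩]
    congr 1
  set S : Finset ℕ :=
    Finset.map ⟨fun i : Fin k => (i : ℕ)+1, fun a b h => by
      apply Fin.ext
      have h' : (a:ℕ)+1 = (b:ℕ)+1 := h
      omega⟩ Finset.univ with hS
  have hind := hUindep.measure_inter_preimage_eq_mul S (sets := sets) (fun n _ => hsets_meas n)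
  have hpre : (fun ω (i : Fin k) => U ((i:ℕ)+1) ω) ⁻¹' (Set.pi Set.univ s)
      = ⋂ n ∈ S, U n ⁻¹' sets n := by
    ext ω
    simp only [Set.mem_preimage, Set.mem_pi, Set.mem_univ, true_implies, Set.mem_iInter]
    constructor
    · intro h n hn
      simp only [hS, Finset.mem_map, Finset.mem_univ, Function.Embedding.coeFn_mk,
        true_and] at hn
      obtain ⟨i, -, rfl⟩ := hn
      have h' : U ((i:ℕ)+1) ω ∈ sets ((i:ℕ)+1) := by rw [hsets_eq]; exact h i
      exact h'
    · intro h i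
      have := h ((i:ℕ)+1) (by simp [hS]; exact ⟨i, rfl⟩)
      simpa [hsets_eq] using this
  rw [Measure.map_apply hT (MeasurableSet.univ_pi hs), hpre, hind, hS, Finset.prod_map]
  refine Finset.prod_congr rfl fun i _ => ?_
  show μ (U ((i:ℕ)+1) ⁻¹' sets ((i:ℕ)+1)) = _
  rw [hsets_eq, ← Measure.map_apply (hUmeas _) (hs i), hUunif]

/-- If `R` is an a.e. strict total order on `[0,1]` and `(U_i)_{i ≥ 1}` is an i.i.d. sequence of
uniform random variables on `[0,1]`, then for every `k ≥ 2` the number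
`N_k = #{i ∈ {2,…,k} : (U_i, U_1) ∈ R}` is uniformly distributed on `{0, 1, …, k−1}`. -/
theorem rank_among_iid_uniform_is_uniform
    {Ω : Type*} [MeasurableSpace Ω] (μ : Measure Ω) [IsProbabilityMeasure μ]
    (R : Set (ℝ × ℝ)) (hR : AEStrictTotalOrder R)
    (U : ℕ → Ω → ℝ) (hUmeas : ∀ i, Measurable (U i))
    (hUindep : iIndepFun U μ)
    (hUunif : ∀ i, μ.map (U i) = leb01)
    (k : ℕ) (hk : 2 ≤ k) :
    ∀ j < k,
      μ {ω | ((Finset.Icc 2 k).filter (fun i => (U i ω, U 1 ω) ∈ R)).card = j}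
        = (k : ℝ≥0∞)⁻¹ := by
  intro j hj
  have hk0 : 0 < k := by omega
  set T : Ω → (Fin k → ℝ) := fun ω i => U ((i:ℕ)+1) ω with hTdef
  have hT : Measurable T := measurable_pi_lambda _ (fun i => hUmeas _)
  set ν : Measure (Fin k → ℝ) := Measure.pi (fun _ => leb01) with hν
  have hTlaw : μ.map T = ν := map_T_eq_pi μ U hUmeas hUindep hUunif k
  haveI : IsProbabilityMeasure ν := by rw [hν]; infer_instance
  set i₀ : Fin k := ⟨0, hk0⟩ with hi₀
  have hmemR : ∀ a b : Fin k, MeasurableSet {x : Fin k → ℝ | (x a, x b) ∈ R} :=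
    fun a b => ((measurable_pi_apply a).prodMk (measurable_pi_apply b)) hR.measurable
  set BB : Fin k → Set (Fin k → ℝ) := fun i =>
    {x | (Finset.univ.filter (fun m => m ≠ i ∧ (x m, x i) ∈ R)).card = j} with hBB
  have hBBmeas : ∀ i, MeasurableSet (BB i) := by
    intro i
    have hcount : Measurable (fun x : Fin k → ℝ =>
        (Finset.univ.filter (fun m => m ≠ i ∧ (x m, x i) ∈ R)).card) := by
      simp only [Finset.card_filter]
      apply Finset.measurable_sum
      intro m _
      refine Measurable.ite ?_ measurable_const measurable_const
      have : {x : Fin k → ℝ | m ≠ i ∧ (x m, x i) ∈ R}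
          = {x : Fin k → ℝ | m ≠ i} ∩ {x : Fin k → ℝ | (x m, x i) ∈ R} := rfl
      rw [this]
      exact (MeasurableSet.const _).inter (hmemR m i)
    exact hcount (measurableSet_singleton j)
  -- the good set
  set G : Set (Fin k → ℝ) := {x | (∀ a b : Fin k, a ≠ b →
      (x a ≠ x b ∧ Xor' ((x a, x b) ∈ R) ((x b, x a) ∈ R))) ∧
      (∀ a b c : Fin k, a ≠ b → b ≠ c → a ≠ c →
        ((x a, x b) ∈ R → (x b, x c) ∈ R → (x a, x c) ∈ R))} with hG
  have hne_meas : ∀ a b : Fin k, MeasurableSet {x : Fin k → ℝ | x a ≠ x b} := by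
    intro a b
    have : {x : Fin k → ℝ | x a ≠ x b} = {x : Fin k → ℝ | x a = x b}ᶜ := rfl
    rw [this]
    exact (measurableSet_eq_fun (measurable_pi_apply a) (measurable_pi_apply b)).compl
  have hGmeas : MeasurableSet G := by
    rw [hG, Set.setOf_and]
    apply MeasurableSet.inter
    · rw [Set.setOf_forall]
      refine MeasurableSet.iInter fun a => ?_
      rw [Set.setOf_forall]
      refine MeasurableSet.iInter fun b => ?_
      refine measurableSet_imp (MeasurableSet.const _) ?_
      rw [Set.setOf_and]
      exact (hne_meas a b).inter (measurableSet_xor (hmemR a b) (hmemR b a))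
    · rw [Set.setOf_forall]
      refine MeasurableSet.iInter fun a => ?_
      rw [Set.setOf_forall]
      refine MeasurableSet.iInter fun b => ?_
      rw [Set.setOf_forall]
      refine MeasurableSet.iInter fun c => ?_
      refine measurableSet_imp (MeasurableSet.const _) ?_
      refine measurableSet_imp (MeasurableSet.const _) ?_
      refine measurableSet_imp (MeasurableSet.const _) ?_
      exact measurableSet_imp (hmemR a b) (measurableSet_imp (hmemR b c) (hmemR a c))
  -- almost sure goodness
  have hval_ne : ∀ a b : Fin k, a ≠ b → ((a:ℕ)+1) ≠ ((b:ℕ)+1) := by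
    intro a b hab h
    exact hab (Fin.ext (by omega))
  have hpair_law : ∀ a b : Fin k, a ≠ b →
      μ.map (fun ω => (U ((a:ℕ)+1) ω, U ((b:ℕ)+1) ω)) = leb01.prod leb01 := by
    intro a b hab
    have hI : IndepFun (U ((a:ℕ)+1)) (U ((b:ℕ)+1)) μ := hUindep.indepFun (hval_ne a b hab)
    rw [(indepFun_iff_map_prod_eq_prod_map_map (hUmeas _).aemeasurable
      (hUmeas _).aemeasurable).mp hI, hUunif, hUunif]
  have hpair_set : MeasurableSet {p : ℝ × ℝ |
      p.1 ≠ p.2 ∧ Xor' ((p.1, p.2) ∈ R) ((p.2, p.1) ∈ R)} := by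
    rw [Set.setOf_and]
    apply MeasurableSet.inter
    · have : {p : ℝ × ℝ | p.1 ≠ p.2} = {p : ℝ × ℝ | p.1 = p.2}ᶜ := rfl
      rw [this]
      exact (measurableSet_eq_fun measurable_fst measurable_snd).compl
    · refine measurableSet_xor ?_ ?_
      · have : {p : ℝ × ℝ | (p.1, p.2) ∈ R} = R := by ext p; simp
        rw [this]; exact hR.measurable
      · have : {p : ℝ × ℝ | (p.2, p.1) ∈ R} = Prod.swap ⁻¹' R := rfl
        rw [this]; exact measurable_swap hR.measurable
  have hprod_ae : ∀ᵐ p ∂(leb01.prod leb01),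
      p.1 ≠ p.2 ∧ Xor' ((p.1, p.2) ∈ R) ((p.2, p.1) ∈ R) := by
    have hdiag : ∀ᵐ p ∂(leb01.prod leb01), p.1 ≠ p.2 := by
      rw [ae_iff]
      simp only [ne_eq, not_not]
      exact leb01_diag
    filter_upwards [hR.total, hdiag] with p h1 h2
    exact ⟨h2, h1 h2⟩
  have hpair_ae : ∀ a b : Fin k, a ≠ b → (∀ᵐ ω ∂μ,
      (U ((a:ℕ)+1) ω ≠ U ((b:ℕ)+1) ω ∧
        Xor' ((U ((a:ℕ)+1) ω, U ((b:ℕ)+1) ω) ∈ R) ((U ((b:ℕ)+1) ω, U ((a:ℕ)+1) ω) ∈ R))) := by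
    intro a b hab
    exact ae_of_map ((hUmeas _).prodMk (hUmeas _)) (hpair_law a b hab) hpair_set hprod_ae
  have htrans_set : MeasurableSet {p : ℝ × (ℝ × ℝ) |
      (p.1, p.2.1) ∈ R → (p.2.1, p.2.2) ∈ R → (p.1, p.2.2) ∈ R} := by
    have h1 : Measurable (fun p : ℝ × (ℝ × ℝ) => (p.1, p.2.1)) :=
      measurable_fst.prodMk (measurable_fst.comp measurable_snd)
    have h2 : Measurable (fun p : ℝ × (ℝ × ℝ) => (p.2.1, p.2.2)) :=
      (measurable_fst.comp measurable_snd).prodMk (measurable_snd.comp measurable_snd)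
    have h3 : Measurable (fun p : ℝ × (ℝ × ℝ) => (p.1, p.2.2)) :=
      measurable_fst.prodMk (measurable_snd.comp measurable_snd)
    exact measurableSet_imp (h1 hR.measurable)
      (measurableSet_imp (h2 hR.measurable) (h3 hR.measurable))
  have htriple_ae : ∀ a b c : Fin k, a ≠ b → b ≠ c → a ≠ c → (∀ᵐ ω ∂μ,
      ((U ((a:ℕ)+1) ω, U ((b:ℕ)+1) ω) ∈ R → (U ((b:ℕ)+1) ω, U ((c:ℕ)+1) ω) ∈ R →
        (U ((a:ℕ)+1) ω, U ((c:ℕ)+1) ω) ∈ R)) := by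
    intro a b c hab hbc hac
    have hIbc : IndepFun (U ((b:ℕ)+1)) (U ((c:ℕ)+1)) μ := hUindep.indepFun (hval_ne b c hbc)
    have hpairbc : μ.map (fun ω => (U ((b:ℕ)+1) ω, U ((c:ℕ)+1) ω)) = leb01.prod leb01 := by
      rw [(indepFun_iff_map_prod_eq_prod_map_map (hUmeas _).aemeasurable
        (hUmeas _).aemeasurable).mp hIbc, hUunif, hUunif]
    have hI : IndepFun (fun ω => (U ((b:ℕ)+1) ω, U ((c:ℕ)+1) ω)) (U ((a:ℕ)+1)) μ :=
      hUindep.indepFun_prodMk hUmeas _ _ _ (hval_ne b a hab.symm) (hval_ne c a hac.symm)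
    have hlaw3 : μ.map (fun ω => (U ((a:ℕ)+1) ω, (U ((b:ℕ)+1) ω, U ((c:ℕ)+1) ω)))
        = leb01.prod (leb01.prod leb01) := by
      rw [(indepFun_iff_map_prod_eq_prod_map_map (hUmeas _).aemeasurable
        ((hUmeas _).prodMk (hUmeas _)).aemeasurable).mp hI.symm, hUunif, hpairbc]
    exact ae_of_map ((hUmeas _).prodMk ((hUmeas _).prodMk (hUmeas _)))
      hlaw3 htrans_set hR.trans
  have hGood : ∀ᵐ ω ∂μ, T ω ∈ G := by
    have h1ae : ∀ᵐ ω ∂μ, ∀ a b : Fin k, a ≠ b →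
        (U ((a:ℕ)+1) ω ≠ U ((b:ℕ)+1) ω ∧
          Xor' ((U ((a:ℕ)+1) ω, U ((b:ℕ)+1) ω) ∈ R) ((U ((b:ℕ)+1) ω, U ((a:ℕ)+1) ω) ∈ R)) := by
      rw [ae_all_iff]
      intro a
      rw [ae_all_iff]
      intro b
      by_cases hab : a = b
      · filter_upwards with ω h
        exact absurd hab h
      · filter_upwards [hpair_ae a b hab] with ω h _
        exact h
    have h2ae : ∀ᵐ ω ∂μ, ∀ a b c : Fin k, a ≠ b → b ≠ c → a ≠ c →
        ((U ((a:ℕ)+1) ω, U ((b:ℕ)+1) ω) ∈ R → (U ((b:ℕ)+1) ω, U ((c:ℕ)+1) ω) ∈ R →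
          (U ((a:ℕ)+1) ω, U ((c:ℕ)+1) ω) ∈ R) := by
      rw [ae_all_iff]
      intro a
      rw [ae_all_iff]
      intro b
      rw [ae_all_iff]
      intro c
      by_cases hab : a = b
      · filter_upwards with ω h
        exact absurd hab h
      by_cases hbc : b = c
      · filter_upwards with ω _ h
        exact absurd hbc h
      by_cases hac : a = c
      · filter_upwards with ω _ _ h
        exact absurd hac h
      filter_upwards [htriple_ae a b c hab hbc hac] with ω h _ _ _
      exact h
    filter_upwards [h1ae, h2ae] with ω ha hb
    exact ⟨fun a b hab => ha a b hab, fun a b c hab hbc hac => hb a b c hab hbc hac⟩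
  have hGnull : ν Gᶜ = 0 := by
    rw [← hTlaw, Measure.map_apply hT hGmeas.compl]
    have : T ⁻¹' Gᶜ = {ω | ¬ (T ω ∈ G)} := rfl
    rw [this]
    exact hGood
  have hGone : ν G = 1 := (prob_compl_eq_zero_iff hGmeas).mp hGnull
  -- exchangeability via coordinate permutations
  have hswap : ∀ i : Fin k, ν (BB i) = ν (BB i₀) := by
    intro i
    set e : Fin k ≃ Fin k := Equiv.swap i₀ i with he
    have hmp : MeasurePreserving (MeasurableEquiv.piCongrLeft (fun _ : Fin k => ℝ) e) ν ν :=
      measurePreserving_piCongrLeft (fun _ => leb01) e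
    have hΦ : ∀ x : Fin k → ℝ,
        (MeasurableEquiv.piCongrLeft (fun _ : Fin k => ℝ) e) x = fun m => x (e.symm m) := by
      intro x; funext m
      conv_lhs => rw [show m = e (e.symm m) by simp]
      rw [MeasurableEquiv.piCongrLeft_apply_apply]
    have hpreim : (MeasurableEquiv.piCongrLeft (fun _ : Fin k => ℝ) e) ⁻¹' (BB i)
        = BB (e.symm i) := by
      ext x
      simp only [Set.mem_preimage, hΦ, hBB, Set.mem_setOf_eq]
      have hcards : (Finset.univ.filter (fun m => m ≠ i ∧ (x (e.symm m), x (e.symm i)) ∈ R)).card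
          = (Finset.univ.filter (fun m => m ≠ e.symm i ∧ (x m, x (e.symm i)) ∈ R)).card := by
        refine Finset.card_bij' (fun m _ => e.symm m) (fun m _ => e m) ?_ ?_ ?_ ?_
        · intro m hm
          obtain ⟨-, hmi, hmr⟩ := Finset.mem_filter.mp hm
          exact Finset.mem_filter.mpr ⟨Finset.mem_univ _, fun h => hmi (e.symm.injective h), hmr⟩
        · intro m hm
          obtain ⟨-, hmi, hmr⟩ := Finset.mem_filter.mp hm
          refine Finset.mem_filter.mpr ⟨Finset.mem_univ _, ?_, by simpa using hmr⟩
          intro h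
          apply hmi
          rw [← h]
          simp
        · intro m _; simp
        · intro m _; simp
      rw [hcards]
    have hBBpre := hmp.measure_preimage (hBBmeas i).nullMeasurableSet
    rw [hpreim] at hBBpre
    have hei : e.symm i = i₀ := by
      rw [he, Equiv.symm_swap, Equiv.swap_apply_right]
    rw [hei] at hBBpre
    exact hBBpre.symm
  -- the partition argument
  have hcover : G ⊆ ⋃ i ∈ (Finset.univ : Finset (Fin k)), (BB i ∩ G) := by
    intro x hx
    obtain ⟨hx1, hx2⟩ := hx
    obtain ⟨i, hi, -⟩ := comb_core x (fun u v => (u, v) ∈ R) hx1 hx2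
      (j := j) (by simpa [Fintype.card_fin] using hj)
    refine Set.mem_biUnion (Finset.mem_univ i) ⟨?_, hx1, hx2⟩
    show (Finset.univ.filter (fun m => m ≠ i ∧ (x m, x i) ∈ R)).card = j
    exact hi
  have hdisj : ((Finset.univ : Finset (Fin k)) : Set (Fin k)).PairwiseDisjoint
      (fun i => BB i ∩ G) := by
    intro a _ b _ hab
    refine Set.disjoint_left.mpr ?_
    rintro x ⟨hxa, hx1, hx2⟩ ⟨hxb, -⟩
    obtain ⟨i0, -, huniq⟩ := comb_core x (fun u v => (u, v) ∈ R) hx1 hx2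
      (j := j) (by simpa [Fintype.card_fin] using hj)
    have hxa' : (Finset.univ.filter (fun m => m ≠ a ∧ (x m, x a) ∈ R)).card = j := hxa
    have hxb' : (Finset.univ.filter (fun m => m ≠ b ∧ (x m, x b) ∈ R)).card = j := hxb
    exact hab ((huniq a hxa').trans (huniq b hxb').symm)
  have hunion : ⋃ i ∈ (Finset.univ : Finset (Fin k)), (BB i ∩ G) = G := by
    apply subset_antisymm
    · intro x hx
      simp only [Set.mem_iUnion] at hx
      obtain ⟨i, -, -, hxG⟩ := hx
      exact hxG
    · exact hcover
  have hsum : ∑ i : Fin k, ν (BB i ∩ G) = ν G := by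
    rw [← measure_biUnion_finset hdisj (fun i _ => (hBBmeas i).inter hGmeas), hunion]
  have hBBG : ∀ i, ν (BB i ∩ G) = ν (BB i) := fun i => measure_inter_conull hGnull
  have hk_sum : (k : ℝ≥0∞) * ν (BB i₀) = 1 := by
    calc (k : ℝ≥0∞) * ν (BB i₀) = ∑ _i : Fin k, ν (BB i₀) := by
          rw [Finset.sum_const, Finset.card_univ, Fintype.card_fin, nsmul_eq_mul]
      _ = ∑ i : Fin k, ν (BB i) := Finset.sum_congr rfl fun i _ => (hswap i).symm
      _ = ∑ i : Fin k, ν (BB i ∩ G) := Finset.sum_congr rfl fun i _ => (hBBG i).symm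
      _ = ν G := hsum
      _ = 1 := hGone
  have hν0 : ν (BB i₀) = (k : ℝ≥0∞)⁻¹ := by
    have hk' : (k : ℝ≥0∞) ≠ 0 := by
      simp only [ne_eq, Nat.cast_eq_zero]
      omega
    have hk'' : (k : ℝ≥0∞) ≠ ⊤ := ENNReal.natCast_ne_top k
    calc ν (BB i₀) = 1 * ν (BB i₀) := (one_mul _).symm
      _ = ((k : ℝ≥0∞)⁻¹ * k) * ν (BB i₀) := by rw [ENNReal.inv_mul_cancel hk' hk'']
      _ = (k : ℝ≥0∞)⁻¹ * ((k : ℝ≥0∞) * ν (BB i₀)) := by rw [mul_assoc]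
      _ = (k : ℝ≥0∞)⁻¹ := by rw [hk_sum, mul_one]
  -- identify the event
  have hevent : {ω | ((Finset.Icc 2 k).filter (fun i => (U i ω, U 1 ω) ∈ R)).card = j}
      = T ⁻¹' (BB i₀) := by
    ext ω
    simp only [Set.mem_setOf_eq, Set.mem_preimage, hBB]
    have hcards : ((Finset.Icc 2 k).filter (fun i => (U i ω, U 1 ω) ∈ R)).card
        = (Finset.univ.filter (fun m : Fin k => m ≠ i₀ ∧ (T ω m, T ω i₀) ∈ R)).card := by
      refine Finset.card_bij'
        (fun n hn => (⟨n - 1, by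
          have h1 := (Finset.mem_Icc.mp (Finset.mem_filter.mp hn).1)
          omega⟩ : Fin k))
        (fun m _ => (m : ℕ) + 1) ?_ ?_ ?_ ?_
      · intro n hn
        obtain ⟨hn1, hn2⟩ := Finset.mem_filter.mp hn
        obtain ⟨hn3, hn4⟩ := Finset.mem_Icc.mp hn1
        refine Finset.mem_filter.mpr ⟨Finset.mem_univ _, ?_, ?_⟩
        · intro h
          have : n - 1 = (0 : ℕ) := by
            have := congrArg Fin.val h
            simpa [hi₀] using this
          omega
        · show (U ((n-1) + 1) ω, U ((i₀ : ℕ) + 1) ω) ∈ R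
          have h5 : (n - 1) + 1 = n := by omega
          have h6 : ((i₀ : ℕ)) + 1 = 1 := by simp [hi₀]
          rw [h5, h6]
          exact hn2
      · intro m hm
        obtain ⟨-, hm1, hm2⟩ := Finset.mem_filter.mp hm
        refine Finset.mem_filter.mpr ⟨Finset.mem_Icc.mpr ⟨?_, ?_⟩, ?_⟩
        · show 2 ≤ (m : ℕ) + 1
          have : (m : ℕ) ≠ 0 := by
            intro h
            exact hm1 (Fin.ext (by simp [hi₀, h]))
          omega
        · show (m : ℕ) + 1 ≤ k
          have := m.isLt
          omega
        · show (U ((m : ℕ) + 1) ω, U 1 ω) ∈ R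
          have h6 : ((i₀ : ℕ)) + 1 = 1 := by simp [hi₀]
          have := hm2
          rw [show (T ω m, T ω i₀) = (U ((m:ℕ)+1) ω, U (((i₀:ℕ))+1) ω) from rfl, h6] at this
          exact this
      · intro n hn
        obtain ⟨hn1, -⟩ := Finset.mem_filter.mp hn
        obtain ⟨hn3, -⟩ := Finset.mem_Icc.mp hn1
        simp only []
        omega
      · intro m _
        exact Fin.ext (by simp)
    rw [hcards]
  rw [hevent, ← hν0, ← hTlaw, Measure.map_apply hT (hBBmeas i₀)]
end
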